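/- arXiv:math/0610731 — 15 statements merged into one kernel-verified Lean document; each statement's English description precedes it below -/
import Mathlib

section
/- Let A be a Z-graded commutative ring. The natural map f : Spec_gr(A) → Spec(A_0) sending a homogeneous prime ideal p to its degree-0 part p_0 is surjective, and moreover for every prime q of A_0 there exists a unique homogeneous prime ideal q~ of A with (q~)_0 = q which contains every homogeneous prime p with p_0 = q. -/
section aux
variable {A : Type*} [CommRing A] (𝒜 : ℤ → AddSubgroup A) [GradedRing 𝒜]

lemma mem0_aux {d : ℤ} {a b : A} (ha : a ∈ 𝒜 d) (hb : b ∈ 𝒜 (-d)) : a * b ∈ 𝒜 0 := by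
  simpa using SetLike.mul_mem_graded ha hb

/-- The degree-zero component, as an element of `𝒜 0`. -/
def pi0 (x : A) : 𝒜 0 := DirectSum.decompose 𝒜 x 0

lemma pi0_of_mem {u : A} (hu : u ∈ 𝒜 0) : pi0 𝒜 u = (⟨u, hu⟩ : 𝒜 0) := by
  apply Subtype.ext
  exact DirectSum.decompose_of_mem_same 𝒜 hu

lemma pi0_add (x y : A) : pi0 𝒜 (x + y) = pi0 𝒜 x + pi0 𝒜 y := by
  apply Subtype.ext
  show (DirectSum.decompose 𝒜 (x + y) 0 : A) = _
  rw [DirectSum.decompose_add, DirectSum.add_apply]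
  rfl

lemma pi0_zero : pi0 𝒜 (0 : A) = 0 := by
  apply Subtype.ext
  show (DirectSum.decompose 𝒜 (0 : A) 0 : A) = _
  rw [DirectSum.decompose_zero]
  rfl

variable (q : Ideal (𝒜 0))

/-- The underlying additive submonoid of `q~`. -/
def tildeSub : AddSubmonoid A where
  carrier := {x | ∀ (d : ℤ) (b : A), b ∈ 𝒜 (-d) →
    pi0 𝒜 ((DirectSum.decompose 𝒜 x d : A) * b) ∈ q}
  add_mem' := by
    intro x y hx hy d b hb
    have h : (DirectSum.decompose 𝒜 (x + y) d : A)
        = (DirectSum.decompose 𝒜 x d : A) + (DirectSum.decompose 𝒜 y d : A) := by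
      rw [DirectSum.decompose_add, DirectSum.add_apply]; rfl
    rw [h, add_mul, pi0_add]
    exact q.add_mem (hx d b hb) (hy d b hb)
  zero_mem' := by
    intro d b hb
    have h : (DirectSum.decompose 𝒜 (0 : A) d : A) = 0 := by
      rw [DirectSum.decompose_zero]; rfl
    rw [h, zero_mul, pi0_zero]
    exact q.zero_mem

lemma mem_tildeSub_of_homog {e : ℤ} {x : A} (hx : x ∈ 𝒜 e) :
    x ∈ tildeSub 𝒜 q ↔ ∀ (b : A), b ∈ 𝒜 (-e) → pi0 𝒜 (x * b) ∈ q := by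
  constructor
  · intro h b hb
    have := h e b hb
    rwa [DirectSum.decompose_of_mem_same 𝒜 hx] at this
  · intro h d b hb
    by_cases hde : d = e
    · subst hde
      rw [DirectSum.decompose_of_mem_same 𝒜 hx]
      exact h b hb
    · rw [DirectSum.decompose_of_mem_ne 𝒜 hx (Ne.symm hde), zero_mul, pi0_zero]
      exact q.zero_mem

def tildeIdeal : Ideal A where
  carrier := tildeSub 𝒜 q
  add_mem' := (tildeSub 𝒜 q).add_mem
  zero_mem' := (tildeSub 𝒜 q).zero_mem
  smul_mem' := by
    intro c x hx
    simp only [smul_eq_mul, SetLike.mem_coe]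
    classical
    have hmul : c * x = ∑ i ∈ (DirectSum.decompose 𝒜 c).support,
        ∑ j ∈ (DirectSum.decompose 𝒜 x).support,
          ((DirectSum.decompose 𝒜 c i : A) * (DirectSum.decompose 𝒜 x j : A)) := by
      conv_lhs => rw [← DirectSum.sum_support_decompose 𝒜 c,
        ← DirectSum.sum_support_decompose 𝒜 x]
      rw [Finset.sum_mul_sum]
    rw [hmul]
    apply AddSubmonoid.sum_mem
    intro i _
    apply AddSubmonoid.sum_mem
    intro j _
    have hterm : (DirectSum.decompose 𝒜 c i : A) * (DirectSum.decompose 𝒜 x j : A) ∈ 𝒜 (i + j) :=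
      SetLike.mul_mem_graded (SetLike.coe_mem _) (SetLike.coe_mem _)
    rw [mem_tildeSub_of_homog 𝒜 q hterm]
    intro b hb
    have hcb : (DirectSum.decompose 𝒜 c i : A) * b ∈ 𝒜 (-j) := by
      have := SetLike.mul_mem_graded (SetLike.coe_mem ((DirectSum.decompose 𝒜 c) i)) hb
      convert this using 2
      ring
    have := hx j _ hcb
    convert this using 2
    ring

lemma mem_tilde_of_homog {e : ℤ} {x : A} (hx : x ∈ 𝒜 e) :
    x ∈ tildeIdeal 𝒜 q ↔ ∀ (b : A), b ∈ 𝒜 (-e) → pi0 𝒜 (x * b) ∈ q :=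
  mem_tildeSub_of_homog 𝒜 q hx

lemma tilde_homogeneous : (tildeIdeal 𝒜 q).IsHomogeneous 𝒜 := by
  intro i x hx
  rw [mem_tilde_of_homog 𝒜 q (SetLike.coe_mem ((DirectSum.decompose 𝒜 x) i))]
  intro b hb
  exact hx i b hb

lemma tilde_zero_part : ∀ a : 𝒜 0, ((a : A) ∈ tildeIdeal 𝒜 q ↔ a ∈ q) := by
  intro a
  rw [mem_tilde_of_homog 𝒜 q a.2]
  constructor
  · intro h
    have := h 1 (by simpa using SetLike.one_mem_graded 𝒜)
    rwa [mul_one, pi0_of_mem 𝒜 a.2, Subtype.coe_eta] at this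
  · intro ha b hb
    have hb0 : b ∈ 𝒜 0 := by simpa using hb
    have : pi0 𝒜 ((a : A) * b) = a * (⟨b, hb0⟩ : 𝒜 0) := by
      rw [pi0_of_mem 𝒜 (mem0_aux 𝒜 a.2 hb)]
      apply Subtype.ext
      rfl
    rw [this]
    exact q.mul_mem_right _ ha

lemma tilde_prime (hq : q.IsPrime) : (tildeIdeal 𝒜 q).IsPrime := by
  apply (tilde_homogeneous 𝒜 q).isPrime_of_homogeneous_mem_or_mem
  · intro htop
    have h1 : (1 : A) ∈ tildeIdeal 𝒜 q := htop ▸ Submodule.mem_top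
    have := (tilde_zero_part 𝒜 q 1).mp (by simpa using h1)
    exact hq.ne_top (q.eq_top_of_isUnit_mem this isUnit_one)
  · rintro x y ⟨m, hx⟩ ⟨n, hy⟩ hxy
    by_contra hcon
    push_neg at hcon
    obtain ⟨hxn, hyn⟩ := hcon
    rw [mem_tilde_of_homog 𝒜 q hx] at hxn
    rw [mem_tilde_of_homog 𝒜 q hy] at hyn
    push_neg at hxn hyn
    obtain ⟨b1, hb1, hxb1⟩ := hxn
    obtain ⟨b2, hb2, hyb2⟩ := hyn
    have hxym : x * y ∈ 𝒜 (m + n) := SetLike.mul_mem_graded hx hy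
    have hb12 : b1 * b2 ∈ 𝒜 (-(m + n)) := by
      have := SetLike.mul_mem_graded hb1 hb2
      convert this using 2; ring
    have hmem := (mem_tilde_of_homog 𝒜 q hxym).mp hxy (b1 * b2) hb12
    have heq : pi0 𝒜 (x * y * (b1 * b2)) = pi0 𝒜 (x * b1) * pi0 𝒜 (y * b2) := by
      rw [pi0_of_mem 𝒜 (mem0_aux 𝒜 hxym hb12), pi0_of_mem 𝒜 (mem0_aux 𝒜 hx hb1),
        pi0_of_mem 𝒜 (mem0_aux 𝒜 hy hb2)]
      apply Subtype.ext
      show x * y * (b1 * b2) = (x * b1) * (y * b2)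
      ring
    rw [heq] at hmem
    rcases hq.mem_or_mem hmem with h | h
    · exact hxb1 h
    · exact hyb2 h

lemma tilde_max (p : Ideal A) (hp : p.IsHomogeneous 𝒜)
    (hp0 : ∀ a : 𝒜 0, ((a : A) ∈ p ↔ a ∈ q)) : p ≤ tildeIdeal 𝒜 q := by
  intro x hx d b hb
  have hxd : (DirectSum.decompose 𝒜 x d : A) ∈ p := hp d hx
  have hm : (DirectSum.decompose 𝒜 x d : A) * b ∈ p := p.mul_mem_right b hxd
  have hu : (DirectSum.decompose 𝒜 x d : A) * b ∈ 𝒜 0 :=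
    mem0_aux 𝒜 (SetLike.coe_mem _) hb
  rw [pi0_of_mem 𝒜 hu]
  exact (hp0 ⟨_, hu⟩).mp hm

end aux

/-- For a `ℤ`-graded commutative ring `A`, the map
`Spec_gr(A) → Spec(A₀)`, `p ↦ p₀`, is surjective; moreover for every prime `q` of `A₀`
there is a unique homogeneous prime `q~` lying over `q` which contains every homogeneous
prime lying over `q`. -/
theorem stmt_0 {A : Type*} [CommRing A] (𝒜 : ℤ → AddSubgroup A) [GradedRing 𝒜]
    (q : Ideal (𝒜 0)) (hq : q.IsPrime) :
    (∃ p : Ideal A, p.IsPrime ∧ p.IsHomogeneous 𝒜 ∧ ∀ a : 𝒜 0, ((a : A) ∈ p ↔ a ∈ q)) ∧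
    (∃! pt : Ideal A, pt.IsPrime ∧ pt.IsHomogeneous 𝒜 ∧
      (∀ a : 𝒜 0, ((a : A) ∈ pt ↔ a ∈ q)) ∧
      ∀ p : Ideal A, p.IsPrime → p.IsHomogeneous 𝒜 →
        (∀ a : 𝒜 0, ((a : A) ∈ p ↔ a ∈ q)) → p ≤ pt) := by
  refine ⟨⟨tildeIdeal 𝒜 q, tilde_prime 𝒜 q hq, tilde_homogeneous 𝒜 q, tilde_zero_part 𝒜 q⟩, ?_⟩
  refine ⟨tildeIdeal 𝒜 q, ⟨tilde_prime 𝒜 q hq, tilde_homogeneous 𝒜 q, tilde_zero_part 𝒜 q,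
    fun p _ hph hp0 => tilde_max 𝒜 q p hph hp0⟩, ?_⟩
  rintro pt ⟨hpt, hpth, hpt0, hptmax⟩
  exact le_antisymm (tilde_max 𝒜 q pt hpth hpt0)
    (hptmax _ (tilde_prime 𝒜 q hq) (tilde_homogeneous 𝒜 q) (tilde_zero_part 𝒜 q))
end

section
/- Let A be a Z-graded commutative ring and p a homogeneous prime ideal of A. Then p equals the canonical prime q~ associated to q = p_0 (i.e. p is maximal among homogeneous primes lying over p_0) if and only if for every integer d, p_d = A_d implies p_{-d} = A_{-d}. -/
/-- For a homogeneous prime `p` of a `ℤ`-graded commutative ring `A`,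
`p` equals the canonical prime `q~` associated to `q = p₀` (where `a ∈ A_d` lies in `q~`
iff `a*b ∈ q` for all `b ∈ A_{-d}`) if and only if for all `d`, `p_d = A_d ↔ p_{-d} = A_{-d}`. -/
theorem stmt_1 {A : Type*} [CommRing A] (𝒜 : ℤ → AddSubgroup A) [GradedRing 𝒜]
    (p : Ideal A) (hp : p.IsPrime) (hhom : p.IsHomogeneous 𝒜) :
    (∀ d : ℤ, ∀ a ∈ 𝒜 d, (a ∈ p ↔ ∀ b ∈ 𝒜 (-d), a * b ∈ p)) ↔
    (∀ d : ℤ, (∀ a ∈ 𝒜 d, a ∈ p) ↔ (∀ a ∈ 𝒜 (-d), a ∈ p)) := by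
  constructor
  · intro h d
    constructor
    · intro hd a ha
      exact (h (-d) a ha).2 fun b hb =>
        Ideal.mul_mem_left p a (hd b (by simpa using hb))
    · intro hd a ha
      exact (h d a ha).2 fun b hb => Ideal.mul_mem_left p a (hd b hb)
  · intro h d a ha
    constructor
    · intro hap b _; exact Ideal.mul_mem_right b p hap
    · intro hab
      by_cases hc : ∀ b ∈ 𝒜 (-d), b ∈ p
      · exact (h d).2 hc a ha
      · push_neg at hc
        obtain ⟨b, hb, hbp⟩ := hc
        exact (hp.mem_or_mem (hab b hb)).resolve_right hbp
end

section
/- If a Z-graded commutative ring A is quasi-standard (contains an invertible homogeneous element of positive degree), then A is good: for every homogeneous prime ideal p of A and every integer d, p_d = A_d holds if and only if p_{-d} = A_{-d}; equivalently, the map p ↦ p_0 from homogeneous primes of A to primes of A_0 is injective. -/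
/-!
A homogeneous unit `u` of degree `e > 0` has its inverse in degree `-e`, so the degrees of
homogeneous units form a subgroup containing `e ℤ`. For homogeneous `x` of degree `i`,
multiplying `x ^ k` by a suitable power of `u` or `u⁻¹` moves it into degree `k i + n e`
without changing whether it lies in a given prime. For `x` of degree `-d`, `x ^ (e - 1)` lands in
degree `d`; for a homogeneous `x ∈ p`, `x ^ e` lands in degree `0`.
-/

open DirectSum

section UnitDegrees

variable {ι A σ : Type*} [DecidableEq ι] [AddGroup ι] [Semiring A] [SetLike σ A]
  [AddSubmonoidClass σ A] (𝒜 : ι → σ) [GradedRing 𝒜]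

variable {𝒜} in
theorem Units.inv_mem_graded {u : Aˣ} {e : ι} (hu : (u : A) ∈ 𝒜 e) : (↑u⁻¹ : A) ∈ 𝒜 (-e) := by
  have h := coe_decompose_mul_add_of_left_mem 𝒜 (b := (↑u⁻¹ : A)) (j := -e) hu
  rw [u.mul_inv, add_neg_cancel, decompose_of_mem_same 𝒜 SetLike.GradedOne.one_mem] at h
  rw [Units.inv_eq_of_mul_eq_one_right h.symm]
  exact SetLike.coe_mem _

def unitDegrees : AddSubgroup ι where
  carrier := {i | ∃ u : Aˣ, (u : A) ∈ 𝒜 i}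
  zero_mem' := ⟨1, SetLike.GradedOne.one_mem⟩
  add_mem' := fun ⟨u, hu⟩ ⟨v, hv⟩ => ⟨u * v, SetLike.GradedMul.mul_mem hu hv⟩
  neg_mem' := fun ⟨u, hu⟩ => ⟨u⁻¹, Units.inv_mem_graded hu⟩

variable {𝒜} in
theorem exists_units_pow_mul_mem {x : A} {i j : ι} (hx : x ∈ 𝒜 i) (k : ℕ)
    (hk : -(k • i) + j ∈ unitDegrees 𝒜) : ∃ u : Aˣ, x ^ k * u ∈ 𝒜 j := by
  obtain ⟨u, hu⟩ := hk
  refine ⟨u, ?_⟩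
  simpa only [add_neg_cancel_left] using
    SetLike.GradedMul.mul_mem (SetLike.pow_mem_graded k hx) hu

end UnitDegrees

section IntGraded

variable {A σ : Type*} [CommSemiring A] [SetLike σ A] [AddSubmonoidClass σ A]
  {𝒜 : ℤ → σ} [GradedRing 𝒜] {e : ℤ}

theorem Ideal.IsPrime.mem_of_pow_mul_units_mem {p : Ideal A} (hp : p.IsPrime) {x : A} {k : ℕ}
    (u : Aˣ) (h : x ^ k * u ∈ p) : x ∈ p :=
  hp.mem_of_pow_mem k ((p.mul_unit_mem_iff_mem u.isUnit).1 h)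

theorem forall_mem_neg_of_forall_mem (he : 0 < e) (heU : e ∈ unitDegrees 𝒜) {p : Ideal A}
    (hp : p.IsPrime) {d : ℤ} (hd : ∀ a ∈ 𝒜 d, a ∈ p) : ∀ x ∈ 𝒜 (-d), x ∈ p := by
  intro x hx
  lift e to ℕ using he.le
  obtain ⟨k, rfl⟩ := Nat.exists_eq_add_one_of_ne_zero (by omega : e ≠ 0)
  have hdeg : -(k • -d) + d = d • ((k + 1 : ℕ) : ℤ) := by simp only [smul_eq_mul]; push_cast; ring
  obtain ⟨u, hu⟩ := exists_units_pow_mul_mem hx k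
    (hdeg ▸ (unitDegrees 𝒜).zsmul_mem heU d)
  exact hp.mem_of_pow_mul_units_mem u (hd _ hu)

theorem Ideal.IsHomogeneous.le_of_forall_mem_degree_zero (he : 0 < e)
    (heU : e ∈ unitDegrees 𝒜) {p q : Ideal A} (hp : p.IsHomogeneous 𝒜) (hq : q.IsPrime)
    (h0 : ∀ a ∈ 𝒜 0, a ∈ p → a ∈ q) : p ≤ q := by
  classical
  lift e to ℕ using he.le
  have homogeneous_mem {i : ℤ} {x : A} (hx : x ∈ 𝒜 i) (hxp : x ∈ p) : x ∈ q := by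
    have hdeg : -(e • i) + 0 = -i • (e : ℤ) := by simp only [nsmul_eq_mul, smul_eq_mul]; ring
    obtain ⟨u, hu⟩ := exists_units_pow_mul_mem hx e (hdeg ▸ (unitDegrees 𝒜).zsmul_mem heU (-i))
    refine hq.mem_of_pow_mul_units_mem u (h0 _ hu (p.mul_mem_right _ (p.pow_mem_of_mem hxp e ?_)))
    exact_mod_cast he
  intro x hx
  rw [← sum_support_decompose 𝒜 x]
  exact q.sum_mem fun i _ => homogeneous_mem (SetLike.coe_mem _) (hp i hx)

end IntGraded

/-- A quasi-standard `ℤ`-graded commutative ring (one containing an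
invertible homogeneous element of positive degree) is good: every homogeneous prime `p`
satisfies `p_d = A_d ↔ p_{-d} = A_{-d}` for all `d`; equivalently, homogeneous primes are
determined by their degree-zero parts. -/
theorem stmt_3 {A : Type*} [CommRing A] (𝒜 : ℤ → AddSubgroup A) [GradedRing 𝒜]
    (h : ∃ d : ℤ, 0 < d ∧ ∃ a ∈ 𝒜 d, IsUnit a) :
    (∀ p : Ideal A, p.IsPrime → p.IsHomogeneous 𝒜 →
      ∀ d : ℤ, ((∀ a ∈ 𝒜 d, a ∈ p) ↔ (∀ a ∈ 𝒜 (-d), a ∈ p))) ∧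
    (∀ p q : Ideal A, p.IsPrime → q.IsPrime → p.IsHomogeneous 𝒜 → q.IsHomogeneous 𝒜 →
      (∀ a ∈ 𝒜 0, (a ∈ p ↔ a ∈ q)) → p = q) := by
  obtain ⟨e, he, _, ha, ⟨u, rfl⟩⟩ := h
  have heU : e ∈ unitDegrees 𝒜 := ⟨u, ha⟩
  refine ⟨fun p hp _ d => ⟨forall_mem_neg_of_forall_mem he heU hp, fun hd => ?_⟩, ?_⟩
  · simpa using forall_mem_neg_of_forall_mem he heU hp hd
  · intro p q hp hq hph hqh h0
    exact le_antisymm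
      (hph.le_of_forall_mem_degree_zero he heU hq fun a ha => (h0 a ha).1)
      (hqh.le_of_forall_mem_degree_zero he heU hp fun a ha => (h0 a ha).2)
end

section
/- If a Z-graded commutative ring A is quasi-trivial (every homogeneous element of nonzero degree is nilpotent), then A is good: the map p ↦ p_0 from homogeneous prime ideals of A to prime ideals of A_0 is injective. -/
/-- A quasi-trivial `ℤ`-graded commutative ring (every homogeneous element
of nonzero degree is nilpotent) is good: homogeneous primes are determined by their
degree-zero parts. -/
theorem stmt_4 {A : Type*} [CommRing A] (𝒜 : ℤ → AddSubgroup A) [GradedRing 𝒜]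
    (h : ∀ d : ℤ, d ≠ 0 → ∀ a ∈ 𝒜 d, IsNilpotent a) :
    ∀ p q : Ideal A, p.IsPrime → q.IsPrime → p.IsHomogeneous 𝒜 → q.IsHomogeneous 𝒜 →
      (∀ a ∈ 𝒜 0, (a ∈ p ↔ a ∈ q)) → p = q := by
  intro p q hp hq hph hqh h0
  ext x
  rw [hph.mem_iff, hqh.mem_iff]
  refine forall_congr' fun i => ?_
  rcases eq_or_ne i 0 with rfl | hi
  · exact h0 _ (SetLike.coe_mem _)
  · have hn := h i hi _ (SetLike.coe_mem (DirectSum.decompose 𝒜 x i))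
    exact iff_of_true (hp.mem_of_pow_mem hn.choose (by rw [hn.choose_spec]; exact p.zero_mem))
      (hq.mem_of_pow_mem hn.choose (by rw [hn.choose_spec]; exact q.zero_mem))
end

section
/- Let A be a Z-graded commutative ring, M a graded A-module, and S ⊆ A a multiplicative set of homogeneous elements such that for every integer d, S contains an element of degree d if and only if it contains an element of degree -d. Then the natural map of (S_0^{-1}A_0)-modules from S_0^{-1}M_0 to the degree-0 part (S^{-1}M)_0 of the graded localization is an isomorphism. -/
/-- Let `A` be a `ℤ`-graded commutative ring, `M` a graded `A`-module and
`S` a homogeneous multiplicative system such that `S` meets degree `d` iff it meets degree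
`-d`.  Then the natural map `S₀⁻¹M₀ → (S⁻¹M)₀` is an isomorphism.  This is expressed
elementwise: it is injective (two degree-zero fractions equal in `S⁻¹M` are already equal
in `S₀⁻¹M₀`) and surjective (every degree-zero fraction of `S⁻¹M` equals a fraction with
numerator in `M₀` and denominator in `S₀`), using the standard description
`m/s = m'/s' ↔ ∃ u ∈ S, u • s' • m = u • s • m'` of equality in a localized module. -/
theorem stmt_6 {A M : Type*} [CommRing A] [AddCommGroup M] [Module A M]
    (𝒜 : ℤ → AddSubgroup A) (ℳ : ℤ → AddSubgroup M)
    [GradedRing 𝒜] [DirectSum.Decomposition ℳ] [SetLike.GradedSMul 𝒜 ℳ]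
    (S : Submonoid A) (h0 : (0 : A) ∉ S) (hhom : ∀ s ∈ S, ∃ d : ℤ, s ∈ 𝒜 d)
    (hsym : ∀ d : ℤ, (∃ s ∈ S, s ∈ 𝒜 d) ↔ ∃ s ∈ S, s ∈ 𝒜 (-d)) :
    ((∀ m ∈ ℳ 0, ∀ m' ∈ ℳ 0, ∀ s ∈ S, s ∈ 𝒜 0 → ∀ s' ∈ S, s' ∈ 𝒜 0 →
        (∃ u ∈ S, u • s' • m = u • s • m') →
        ∃ u ∈ S, u ∈ 𝒜 0 ∧ u • s' • m = u • s • m') ∧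
     (∀ i : ℤ, ∀ m ∈ ℳ i, ∀ s ∈ S, s ∈ 𝒜 i →
        ∃ m₀ ∈ ℳ 0, ∃ s₀ ∈ S, s₀ ∈ 𝒜 0 ∧ ∃ u ∈ S, u • s₀ • m = u • s • m₀)) := by
  constructor
  · rintro m _ m' _ s _ _ s' _ _ ⟨u, huS, hu⟩
    obtain ⟨d, hud⟩ := hhom u huS
    obtain ⟨t, htS, htd⟩ := (hsym d).mp ⟨u, huS, hud⟩
    refine ⟨t * u, S.mul_mem htS huS, ?_, ?_⟩
    · simpa using SetLike.mul_mem_graded htd hud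
    · simp [mul_smul, hu]
  · intro i m hm s hsS hsd
    obtain ⟨t, htS, htd⟩ := (hsym i).mp ⟨s, hsS, hsd⟩
    refine ⟨t • m, ?_, t * s, S.mul_mem htS hsS, ?_, 1, S.one_mem, ?_⟩
    · simpa using SetLike.GradedSMul.smul_mem htd hm
    · simpa using SetLike.mul_mem_graded htd hsd
    · simp only [one_smul, mul_smul]; exact smul_comm t s m
end

section
/- Let A be a good Z-graded commutative ring (homogeneous primes are determined by their degree-0 parts) and M a graded A-module. For every homogeneous prime ideal p of A, the natural map (M_0)_{p_0} → (M_p)_0 is an isomorphism of (A_0)_{p_0}-modules, where M_p is the graded localization at the homogeneous elements outside p. -/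
/-- Let `A` be a good `ℤ`-graded commutative ring, `M` a graded `A`-module
and `p` a homogeneous prime.  Then the natural map `(M₀)_{p₀} → (M_p)₀` is an isomorphism,
where `M_p` is the graded localization at the homogeneous elements outside `p`.  This is
expressed elementwise (via `m/s = m'/s' ↔ ∃ u, u • s' • m = u • s • m'`): injectivity and
surjectivity of the natural map. -/
theorem stmt_7 {A M : Type*} [CommRing A] [AddCommGroup M] [Module A M]
    (𝒜 : ℤ → AddSubgroup A) (ℳ : ℤ → AddSubgroup M)
    [GradedRing 𝒜] [DirectSum.Decomposition ℳ] [SetLike.GradedSMul 𝒜 ℳ]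
    (hgood : ∀ q : Ideal A, q.IsPrime → q.IsHomogeneous 𝒜 →
      ∀ d : ℤ, ((∀ a ∈ 𝒜 d, a ∈ q) ↔ (∀ a ∈ 𝒜 (-d), a ∈ q)))
    (p : Ideal A) (hp : p.IsPrime) (hph : p.IsHomogeneous 𝒜) :
    ((∀ m ∈ ℳ 0, ∀ m' ∈ ℳ 0, ∀ s ∈ 𝒜 0, s ∉ p → ∀ s' ∈ 𝒜 0, s' ∉ p →
        (∃ u : A, (∃ d : ℤ, u ∈ 𝒜 d) ∧ u ∉ p ∧ u • s' • m = u • s • m') →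
        ∃ u ∈ 𝒜 0, u ∉ p ∧ u • s' • m = u • s • m') ∧
     (∀ i : ℤ, ∀ m ∈ ℳ i, ∀ s ∈ 𝒜 i, s ∉ p →
        ∃ m₀ ∈ ℳ 0, ∃ s₀ ∈ 𝒜 0, s₀ ∉ p ∧
          ∃ u : A, (∃ d : ℤ, u ∈ 𝒜 d) ∧ u ∉ p ∧ u • s₀ • m = u • s • m₀)) := by
  constructor
  · rintro m hm m' hm' s hs hsp s' hs' hs'p ⟨u, ⟨d, hud⟩, hup, heq⟩
    -- u ∈ 𝒜 d, u ∉ p ⇒ ∃ v ∈ 𝒜 (-d), v ∉ p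
    have hnot : ¬ (∀ a ∈ 𝒜 d, a ∈ p) := fun h => hup (h u hud)
    have hnot' : ¬ (∀ a ∈ 𝒜 (-d), a ∈ p) := by
      rw [← hgood p hp hph d]; exact hnot
    push_neg at hnot'
    obtain ⟨v, hvd, hvp⟩ := hnot'
    refine ⟨v * u, ?_, fun h => hvp (hp.mem_or_mem h |>.resolve_right hup), ?_⟩
    · have := SetLike.mul_mem_graded hvd hud
      simpa using this
    · rw [mul_smul, mul_smul, heq]
  · rintro i m hm s hs hsp
    have hnot : ¬ (∀ a ∈ 𝒜 i, a ∈ p) := fun h => hsp (h s hs)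
    have hnot' : ¬ (∀ a ∈ 𝒜 (-i), a ∈ p) := by
      rw [← hgood p hp hph i]; exact hnot
    push_neg at hnot'
    obtain ⟨t, htd, htp⟩ := hnot'
    refine ⟨t • m, ?_, t * s, ?_, fun h => (hp.mem_or_mem h).elim htp hsp, 1,
      ⟨0, SetLike.GradedOne.one_mem⟩, fun h => hp.ne_top (p.eq_top_iff_one.mpr h), ?_⟩
    · have := SetLike.GradedSMul.smul_mem htd hm
      simpa using this
    · have := SetLike.mul_mem_graded htd hs
      simpa using this
    · rw [one_smul, one_smul, mul_smul, smul_comm t s m]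
end

section
/- Let A be a Z-graded commutative ring and S a multiplicative set of homogeneous elements. If A is good (respectively quasi-standard, standard, quasi-trivial, trivial), then the graded localization S^{-1}A has the same property. -/
/-- The degree-`d` part of the graded localization `S⁻¹A`: fractions `a/s` with `a` and `s`
homogeneous and `deg a - deg s = d`. -/
def LocGrade {A σ : Type*} [CommRing A] [SetLike σ A] (𝒜 : ℤ → σ) (S : Submonoid A)
    (d : ℤ) : Set (Localization S) :=
  {x | ∃ (a : A) (s : S) (i : ℤ), a ∈ 𝒜 (d + i) ∧ (s : A) ∈ 𝒜 i ∧ x = Localization.mk a s}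

/-- An ideal of the graded localization is homogeneous if it is generated by its
homogeneous elements. -/
def LocIsHomogeneous {A σ : Type*} [CommRing A] [SetLike σ A] (𝒜 : ℤ → σ) (S : Submonoid A)
    (Q : Ideal (Localization S)) : Prop :=
  Q = Ideal.span {x | (∃ d : ℤ, x ∈ LocGrade 𝒜 S d) ∧ x ∈ Q}

/-- The graded localization `S⁻¹A` is good: homogeneous primes are determined by their
degree-zero parts. -/
def LocGood {A σ : Type*} [CommRing A] [SetLike σ A] (𝒜 : ℤ → σ) (S : Submonoid A) : Prop :=
  ∀ Q Q' : Ideal (Localization S), Q.IsPrime → Q'.IsPrime →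
    LocIsHomogeneous 𝒜 S Q → LocIsHomogeneous 𝒜 S Q' →
    (∀ x ∈ LocGrade 𝒜 S 0, (x ∈ Q ↔ x ∈ Q')) → Q = Q'

/-- The graded localization `S⁻¹A` is quasi-standard: it contains an invertible
homogeneous element of positive degree. -/
def LocQuasiStandard {A σ : Type*} [CommRing A] [SetLike σ A] (𝒜 : ℤ → σ)
    (S : Submonoid A) : Prop :=
  ∃ d : ℤ, 0 < d ∧ ∃ x ∈ LocGrade 𝒜 S d, IsUnit x

/-- The graded localization `S⁻¹A` is standard: it contains an invertible element of
degree `1`. -/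
def LocStandard {A σ : Type*} [CommRing A] [SetLike σ A] (𝒜 : ℤ → σ)
    (S : Submonoid A) : Prop :=
  ∃ x ∈ LocGrade 𝒜 S 1, IsUnit x

/-- The graded localization `S⁻¹A` is quasi-trivial: every homogeneous element of nonzero
degree is nilpotent. -/
def LocQuasiTrivial {A σ : Type*} [CommRing A] [SetLike σ A] (𝒜 : ℤ → σ)
    (S : Submonoid A) : Prop :=
  ∀ d : ℤ, d ≠ 0 → ∀ x ∈ LocGrade 𝒜 S d, IsNilpotent x

/-- The graded localization `S⁻¹A` is trivial: every homogeneous element of nonzero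
degree is zero. -/
def LocTrivial {A σ : Type*} [CommRing A] [SetLike σ A] (𝒜 : ℤ → σ)
    (S : Submonoid A) : Prop :=
  ∀ d : ℤ, d ≠ 0 → ∀ x ∈ LocGrade 𝒜 S d, x = 0

open Localization

section LocGrade

variable {A σ : Type*} [CommRing A] [SetLike σ A] {𝒜 : ℤ → σ} {S : Submonoid A}

theorem algebraMap_mem_locGrade [SetLike.GradedOne 𝒜] {d : ℤ} {a : A} (ha : a ∈ 𝒜 d) :
    algebraMap A (Localization S) a ∈ LocGrade 𝒜 S d :=
  ⟨a, 1, 0, by rwa [add_zero], SetLike.one_mem_graded 𝒜, (mk_one_eq_algebraMap a).symm⟩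

/-- A fraction `a/s` of nonzero degree has a numerator or a denominator of nonzero degree;
in the latter case `s ∈ I` is a unit of `S⁻¹A`, so `I` extends to the unit ideal. -/
theorem mem_map_of_mem_locGrade (I : Ideal A) (hI : ∀ d ≠ 0, ∀ a ∈ 𝒜 d, a ∈ I) {d : ℤ}
    (hd : d ≠ 0) {x : Localization S} (hx : x ∈ LocGrade 𝒜 S d) :
    x ∈ I.map (algebraMap A (Localization S)) := by
  obtain ⟨a, s, i, ha, hs, rfl⟩ := hx
  by_cases hdi : d + i = 0
  · have htop : I.map (algebraMap A (Localization S)) = ⊤ :=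
      Ideal.eq_top_of_isUnit_mem _ (Ideal.mem_map_of_mem _ (hI i (by omega) _ hs))
        (IsLocalization.map_units _ s)
    exact htop ▸ Submodule.mem_top
  · rw [mk_eq_mk', IsLocalization.mk'_mem_iff]
    exact Ideal.mem_map_of_mem _ (hI _ hdi a ha)

theorem locQuasiTrivial_of_forall_isNilpotent
    (h : ∀ d : ℤ, d ≠ 0 → ∀ a ∈ 𝒜 d, IsNilpotent a) : LocQuasiTrivial 𝒜 S := by
  intro d hd x hx
  have hmap : (nilradical A).map (algebraMap A (Localization S)) ≤ nilradical _ :=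
    Ideal.map_le_iff_le_comap.2 fun a ha => (mem_nilradical.1 ha).map _
  exact mem_nilradical.1 <| hmap <| mem_map_of_mem_locGrade _ (fun e he a ha =>
    mem_nilradical.2 (h e he a ha)) hd hx

theorem locTrivial_of_forall_eq_zero (h : ∀ d : ℤ, d ≠ 0 → ∀ a ∈ 𝒜 d, a = 0) :
    LocTrivial 𝒜 S := by
  intro d hd x hx
  simpa using mem_map_of_mem_locGrade ⊥ (fun e he a ha => Ideal.mem_bot.2 (h e he a ha)) hd hx

end LocGrade

section Homogeneous

variable {A σ : Type*} [CommRing A] [SetLike σ A] [AddSubmonoidClass σ A] {𝒜 : ℤ → σ}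
  [GradedRing 𝒜] {S : Submonoid A}

theorem Ideal.IsHomogeneous.comap_map_of_isLocalization {B : Type*} [CommRing B] [Algebra A B]
    [IsLocalization S B] (hS : ∀ s ∈ S, ∃ d : ℤ, s ∈ 𝒜 d) {I : Ideal A}
    (hI : I.IsHomogeneous 𝒜) :
    ((I.map (algebraMap A B)).comap (algebraMap A B)).IsHomogeneous 𝒜 := by
  intro d a ha
  rw [Ideal.mem_comap, IsLocalization.algebraMap_mem_map_algebraMap_iff S] at ha ⊢
  obtain ⟨s, hs, hsa⟩ := ha
  obtain ⟨e, he⟩ := hS s hs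
  exact ⟨s, hs, DirectSum.coe_decompose_mul_add_of_left_mem 𝒜 he ▸ hI (e + d) hsa⟩

theorem LocIsHomogeneous.map_homogeneousCore_comap {Q : Ideal (Localization S)}
    (hQ : LocIsHomogeneous 𝒜 S Q) :
    ((Q.comap (algebraMap A _)).homogeneousCore 𝒜).toIdeal.map (algebraMap A _) = Q := by
  refine le_antisymm ((Ideal.map_mono (Ideal.toIdeal_homogeneousCore_le 𝒜 _)).trans
    (IsLocalization.map_under S _ Q).le) (hQ.le.trans (Ideal.span_le.2 ?_))
  rintro _ ⟨⟨d, a, s, i, ha, -, rfl⟩, hmem⟩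
  rw [SetLike.mem_coe]
  rw [mk_eq_mk', IsLocalization.mk'_mem_iff] at hmem ⊢
  exact Ideal.mem_map_of_mem _ (Ideal.mem_homogeneousCore_of_homogeneous_of_mem ⟨_, ha⟩ hmem)

theorem LocIsHomogeneous.isHomogeneous_comap (hS : ∀ s ∈ S, ∃ d : ℤ, s ∈ 𝒜 d)
    {Q : Ideal (Localization S)} (hQ : LocIsHomogeneous 𝒜 S Q) :
    (Q.comap (algebraMap A _)).IsHomogeneous 𝒜 := by
  have := (HomogeneousIdeal.isHomogeneous _).comap_map_of_isLocalization (B := Localization S) hS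
    (I := ((Q.comap (algebraMap A _)).homogeneousCore 𝒜).toIdeal)
  rwa [hQ.map_homogeneousCore_comap] at this

/-- Every ideal of `S⁻¹A` is the extension of its contraction, so homogeneous primes of `S⁻¹A`
agreeing in degree `0` contract to homogeneous primes of `A` agreeing in degree `0`. -/
theorem locGood_of_good (hS : ∀ s ∈ S, ∃ d : ℤ, s ∈ 𝒜 d)
    (hA : ∀ p q : Ideal A, p.IsPrime → q.IsPrime → p.IsHomogeneous 𝒜 → q.IsHomogeneous 𝒜 →
      (∀ a ∈ 𝒜 0, (a ∈ p ↔ a ∈ q)) → p = q) :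
    LocGood 𝒜 S := by
  intro Q Q' hQ hQ' hQh hQ'h hagree
  have hcomap : Q.comap (algebraMap A _) = Q'.comap (algebraMap A _) :=
    hA _ _ (hQ.comap _) (hQ'.comap _) (hQh.isHomogeneous_comap hS) (hQ'h.isHomogeneous_comap hS)
      fun a ha => hagree _ (algebraMap_mem_locGrade ha)
  rw [← IsLocalization.map_under S _ Q, ← IsLocalization.map_under S _ Q']
  exact congrArg _ hcomap

end Homogeneous

theorem stmt_8_general {A : Type*} [CommRing A] (𝒜 : ℤ → AddSubgroup A) [GradedRing 𝒜]
    (S : Submonoid A) (hhom : ∀ s ∈ S, ∃ d : ℤ, s ∈ 𝒜 d) :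
    ((∀ p q : Ideal A, p.IsPrime → q.IsPrime → p.IsHomogeneous 𝒜 → q.IsHomogeneous 𝒜 →
        (∀ a ∈ 𝒜 0, (a ∈ p ↔ a ∈ q)) → p = q) → LocGood 𝒜 S) ∧
    ((∃ d : ℤ, 0 < d ∧ ∃ a ∈ 𝒜 d, IsUnit a) → LocQuasiStandard 𝒜 S) ∧
    ((∃ a ∈ 𝒜 1, IsUnit a) → LocStandard 𝒜 S) ∧
    ((∀ d : ℤ, d ≠ 0 → ∀ a ∈ 𝒜 d, IsNilpotent a) → LocQuasiTrivial 𝒜 S) ∧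
    ((∀ d : ℤ, d ≠ 0 → ∀ a ∈ 𝒜 d, a = 0) → LocTrivial 𝒜 S) := by
  refine ⟨locGood_of_good hhom, ?_, ?_, locQuasiTrivial_of_forall_isNilpotent,
    locTrivial_of_forall_eq_zero⟩
  · rintro ⟨d, hd, a, ha, hu⟩
    exact ⟨d, hd, _, algebraMap_mem_locGrade ha, hu.map _⟩
  · rintro ⟨a, ha, hu⟩
    exact ⟨_, algebraMap_mem_locGrade ha, hu.map _⟩

/-- Graded localization at a homogeneous multiplicative system preserves
the properties good / quasi-standard / standard / quasi-trivial / trivial. -/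
theorem stmt_8 {A : Type*} [CommRing A] (𝒜 : ℤ → AddSubgroup A) [GradedRing 𝒜]
    (S : Submonoid A) (h0 : (0 : A) ∉ S) (hhom : ∀ s ∈ S, ∃ d : ℤ, s ∈ 𝒜 d) :
    ((∀ p q : Ideal A, p.IsPrime → q.IsPrime → p.IsHomogeneous 𝒜 → q.IsHomogeneous 𝒜 →
        (∀ a ∈ 𝒜 0, (a ∈ p ↔ a ∈ q)) → p = q) → LocGood 𝒜 S) ∧
    ((∃ d : ℤ, 0 < d ∧ ∃ a ∈ 𝒜 d, IsUnit a) → LocQuasiStandard 𝒜 S) ∧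
    ((∃ a ∈ 𝒜 1, IsUnit a) → LocStandard 𝒜 S) ∧
    ((∀ d : ℤ, d ≠ 0 → ∀ a ∈ 𝒜 d, IsNilpotent a) → LocQuasiTrivial 𝒜 S) ∧
    ((∀ d : ℤ, d ≠ 0 → ∀ a ∈ 𝒜 d, a = 0) → LocTrivial 𝒜 S) :=
  stmt_8_general 𝒜 S hhom
end

section
/- Let A be a Z-graded commutative ring and p a homogeneous prime ideal. Let I(p) ⊆ Z be the subgroup (ideal of Z) generated by all integers i such that p_i ≠ A_i. Then the graded localization A_p is standard if and only if I(p) = Z, and A_p is quasi-standard if and only if I(p) ≠ 0, i.e. if and only if p does not contain all homogeneous elements of nonzero degree. -/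
open Localization

theorem AddSubmonoid.mem_span_int_iff {G : Type*} [AddCommGroup G] (M : AddSubmonoid G)
    {n : G} : n ∈ Submodule.span ℤ (M : Set G) ↔ ∃ i ∈ M, n + i ∈ M := by
  constructor
  · let differences : AddSubgroup G :=
      { carrier := {n | ∃ i ∈ M, n + i ∈ M}
        zero_mem' := ⟨0, M.zero_mem, by simp⟩
        add_mem' := by
          rintro m k ⟨i, hi, hmi⟩ ⟨j, hj, hkj⟩
          exact ⟨i + j, M.add_mem hi hj,
            by simpa [add_add_add_comm] using M.add_mem hmi hkj⟩
        neg_mem' := by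
          rintro m ⟨i, hi, hmi⟩
          exact ⟨m + i, hmi, by simpa using hi⟩ }
    have hspan : Submodule.span ℤ (M : Set G) ≤ differences.toIntSubmodule :=
      Submodule.span_le.mpr fun m hm => ⟨0, M.zero_mem, by simpa using hm⟩
    exact fun hn => hspan hn
  · rintro ⟨i, hi, hni⟩
    simpa using sub_mem (Submodule.subset_span hni) (Submodule.subset_span hi)

theorem Submodule.ne_bot_iff_exists_pos {R M : Type*} [Ring R] [AddCommGroup M]
    [LinearOrder M] [IsOrderedAddMonoid M] [Module R M] (N : Submodule R M) :
    N ≠ ⊥ ↔ ∃ d, 0 < d ∧ d ∈ N := by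
  rw [Submodule.ne_bot_iff]
  constructor
  · rintro ⟨x, hx, hx0⟩
    rcases hx0.lt_or_gt with hneg | hpos
    · exact ⟨-x, neg_pos.mpr hneg, N.neg_mem hx⟩
    · exact ⟨x, hpos, hx⟩
  · rintro ⟨d, hd, hdN⟩
    exact ⟨d, hdN, hd.ne'⟩

/-- The degrees `i` with `p_i ≠ A_i`. -/
def Ideal.properDegrees {ι A σ : Type*} [AddMonoid ι] [CommSemiring A] [SetLike σ A]
    (𝒜 : ι → σ) [SetLike.GradedMonoid 𝒜] (p : Ideal A) [p.IsPrime] : AddSubmonoid ι where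
  carrier := {i | ∃ a ∈ 𝒜 i, a ∉ p}
  zero_mem' :=
    ⟨1, SetLike.one_mem_graded 𝒜, (Ideal.ne_top_iff_one p).mp Ideal.IsPrime.ne_top'⟩
  add_mem' := by
    rintro i j ⟨a, ha, hap⟩ ⟨b, hb, hbp⟩
    exact ⟨a * b, SetLike.mul_mem_graded ha hb,
      fun hab => (Ideal.IsPrime.mem_or_mem' hab).elim hap hbp⟩

section Localization

variable {A : Type*} [CommRing A]

theorem Localization.isUnit_mk_of_mem {S : Submonoid A} {a : A} (ha : a ∈ S) (s : S) :
    IsUnit (mk a s) := by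
  rw [mk_eq_mk']
  exact IsUnit.of_mul_eq_one _ (IsLocalization.mk'_mul_mk'_eq_one ⟨a, ha⟩ s)

theorem Localization.notMem_of_isUnit_mk {S : Submonoid A} {p : Ideal A} [p.IsPrime]
    (hS : S ≤ p.primeCompl) {a : A} {s : S} (h : IsUnit (mk a s)) : a ∉ p := by
  have hS' : S ≤ p.primeCompl.comap (RingHom.id A) := fun _ hx => hS hx
  have hmap := h.map (IsLocalization.map (Localization.AtPrime p) (RingHom.id A) hS' :
    Localization S →+* Localization.AtPrime p)
  rw [mk_eq_mk', IsLocalization.map_mk'] at hmap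
  exact (IsLocalization.AtPrime.isUnit_mk'_iff _ p a _).mp hmap

theorem exists_isUnit_mem_locGrade_iff {σ : Type*} [SetLike σ A] {𝒜 : ℤ → σ}
    [SetLike.GradedMonoid 𝒜] {p : Ideal A} [p.IsPrime] {T : Submonoid A}
    (hT : (T : Set A) = {a | (∃ d, a ∈ 𝒜 d) ∧ a ∉ p}) (d : ℤ) :
    (∃ x ∈ LocGrade 𝒜 T d, IsUnit x) ↔
      ∃ i ∈ p.properDegrees 𝒜, d + i ∈ p.properDegrees 𝒜 := by
  have memT : ∀ {a : A}, a ∈ T ↔ (∃ d, a ∈ 𝒜 d) ∧ a ∉ p := fun {a} =>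
    Set.ext_iff.mp hT a
  constructor
  · rintro ⟨_, ⟨a, s, i, ha, hs, rfl⟩, hu⟩
    exact ⟨i, ⟨s, hs, (memT.mp s.2).2⟩, a, ha,
      notMem_of_isUnit_mk (fun t ht => (memT.mp ht).2) hu⟩
  · rintro ⟨i, ⟨s, hs, hsp⟩, a, ha, hap⟩
    have hsT : s ∈ T := memT.mpr ⟨⟨i, hs⟩, hsp⟩
    exact ⟨_, ⟨a, ⟨s, hsT⟩, i, ha, hs, rfl⟩,
      isUnit_mk_of_mem (memT.mpr ⟨⟨d + i, ha⟩, hap⟩) _⟩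

end Localization

theorem stmt_9_general {A : Type*} [CommRing A] (𝒜 : ℤ → AddSubgroup A) [GradedRing 𝒜]
    (p : Ideal A) (hp : p.IsPrime) :
    ∀ T : Submonoid A, (T : Set A) = {a : A | (∃ d : ℤ, a ∈ 𝒜 d) ∧ a ∉ p} →
      ((LocStandard 𝒜 T ↔ Ideal.span {i : ℤ | ∃ a ∈ 𝒜 i, a ∉ p} = ⊤) ∧
       (LocQuasiStandard 𝒜 T ↔ Ideal.span {i : ℤ | ∃ a ∈ 𝒜 i, a ∉ p} ≠ ⊥) ∧
       (LocQuasiStandard 𝒜 T ↔ ∃ d : ℤ, d ≠ 0 ∧ ∃ a ∈ 𝒜 d, a ∉ p)) := by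
  intro T hT
  have hD : {i : ℤ | ∃ a ∈ 𝒜 i, a ∉ p} = p.properDegrees 𝒜 := rfl
  rw [hD]
  have hunit (d : ℤ) :
      (∃ x ∈ LocGrade 𝒜 T d, IsUnit x) ↔ d ∈ Ideal.span (p.properDegrees 𝒜 : Set ℤ) :=
    (exists_isUnit_mem_locGrade_iff hT d).trans (AddSubmonoid.mem_span_int_iff _).symm
  have hquasi : LocQuasiStandard 𝒜 T ↔ Ideal.span (p.properDegrees 𝒜 : Set ℤ) ≠ ⊥ := by
    simp only [LocQuasiStandard, hunit, Submodule.ne_bot_iff_exists_pos]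
  refine ⟨by rw [LocStandard, hunit, Ideal.eq_top_iff_one], hquasi, ?_⟩
  rw [hquasi, Ne, Ideal.span_eq_bot]
  push Not
  exact exists_congr fun d => and_comm

/-- For a homogeneous prime `p` of a `ℤ`-graded commutative ring `A`, let
`I(p) ⊆ ℤ` be the ideal generated by the integers `i` with `p_i ≠ A_i`, and let `T` be the
multiplicative system of homogeneous elements outside `p`.  Then the graded localization
`A_p = T⁻¹A` is standard iff `I(p) = ℤ`, and quasi-standard iff `I(p) ≠ 0`, i.e. iff `p`
does not contain all homogeneous elements of nonzero degree. -/
theorem stmt_9 {A : Type*} [CommRing A] (𝒜 : ℤ → AddSubgroup A) [GradedRing 𝒜]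
    (p : Ideal A) (hp : p.IsPrime) (hph : p.IsHomogeneous 𝒜) :
    ∀ T : Submonoid A, (T : Set A) = {a : A | (∃ d : ℤ, a ∈ 𝒜 d) ∧ a ∉ p} →
      ((LocStandard 𝒜 T ↔ Ideal.span {i : ℤ | ∃ a ∈ 𝒜 i, a ∉ p} = ⊤) ∧
       (LocQuasiStandard 𝒜 T ↔ Ideal.span {i : ℤ | ∃ a ∈ 𝒜 i, a ∉ p} ≠ ⊥) ∧
       (LocQuasiStandard 𝒜 T ↔ ∃ d : ℤ, d ≠ 0 ∧ ∃ a ∈ 𝒜 d, a ∉ p)) :=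
  stmt_9_general 𝒜 p hp
end

section
/- Let A be a Z-graded commutative ring such that for every homogeneous prime ideal p the graded localization A_p is good. Then A itself is good, i.e. every homogeneous prime p of A satisfies: for all d ∈ Z, p_d = A_d iff p_{-d} = A_{-d}. The analogous local-to-global statement holds with 'quasi-trivial' and with 'trivial' in place of 'good'. -/
open DirectSum

section Helpers

variable {A : Type*} [CommRing A] (𝒜 : ℤ → AddSubgroup A) [GradedRing 𝒜]

/-- The submonoid of homogeneous elements outside a prime ideal. -/
def homT (q : Ideal A) (hq : q.IsPrime) : Submonoid A where
  carrier := {a : A | (∃ d : ℤ, a ∈ 𝒜 d) ∧ a ∉ q}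
  one_mem' := ⟨⟨0, SetLike.one_mem_graded 𝒜⟩,
    fun h => hq.ne_top ((Ideal.eq_top_iff_one q).2 h)⟩
  mul_mem' := by
    rintro x y ⟨⟨i, hi⟩, hx⟩ ⟨⟨j, hj⟩, hy⟩
    exact ⟨⟨i + j, SetLike.mul_mem_graded hi hj⟩,
      fun h => (hq.mem_or_mem h).elim hx hy⟩

lemma mk_mem_map_iff {T : Submonoid A} {I : Ideal A} (hI : I.IsPrime)
    (hTI : ∀ t ∈ T, t ∉ I) (a : A) (s : T) :
    Localization.mk a s ∈ I.map (algebraMap A (Localization T)) ↔ a ∈ I := by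
  constructor
  · intro h
    obtain ⟨⟨⟨y, hy⟩, t⟩, heq⟩ := (IsLocalization.mem_map_algebraMap_iff T _).1 h
    simp only [← Localization.mk_one_eq_algebraMap] at heq
    rw [Localization.mk_mul] at heq
    rw [Localization.mk_eq_mk_iff, Localization.r_iff_exists] at heq
    obtain ⟨c, hc⟩ := heq
    simp only [OneMemClass.coe_one, one_mul, Submonoid.coe_mul, mul_one] at hc
    -- hc : c * (a * t) = c * (s * 1 * y)
    have hmem : (c : A) * (a * t) ∈ I := by
      rw [hc]
      exact I.mul_mem_left _ (I.mul_mem_left _ hy)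
    rcases hI.mem_or_mem hmem with h1 | h2
    · exact absurd h1 (hTI _ c.2)
    · rcases hI.mem_or_mem h2 with h3 | h4
      · exact h3
      · exact absurd h4 (hTI _ t.2)
  · intro ha
    have : Localization.mk a s = Localization.mk 1 s * Localization.mk a 1 := by
      rw [Localization.mk_mul, one_mul, mul_one]
    rw [this, Localization.mk_one_eq_algebraMap]
    exact Ideal.mul_mem_left _ _ (Ideal.mem_map_of_mem _ ha)

lemma locHomog_of_map {T : Submonoid A} {I : Ideal A} (hI : I.IsHomogeneous 𝒜) :
    LocIsHomogeneous 𝒜 T (I.map (algebraMap A (Localization T))) := by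
  classical
  apply le_antisymm
  · rw [Ideal.map_le_iff_le_comap]
    intro z hz
    simp only [Ideal.mem_comap]
    rw [← DirectSum.sum_support_decompose 𝒜 z, map_sum]
    refine Ideal.sum_mem _ (fun i _ => ?_)
    refine Ideal.subset_span ⟨⟨i, ?_⟩, ?_⟩
    · refine ⟨(decompose 𝒜 z i : A), 1, 0, ?_, SetLike.one_mem_graded 𝒜, ?_⟩
      · rw [add_zero]; exact SetLike.coe_mem _
      · rw [Localization.mk_one_eq_algebraMap]
    · exact Ideal.mem_map_of_mem _ (hI i hz)
  · rw [Ideal.span_le]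
    rintro x ⟨-, hx⟩
    exact hx

end Helpers

section P2sec

variable {A : Type*} [CommRing A] (𝒜 : ℤ → AddSubgroup A) [GradedRing 𝒜]

variable (p : Ideal A)

/-- abbreviation for homogeneous components -/
noncomputable def dcomp (x : A) (k : ℤ) : A := (DirectSum.decompose 𝒜 x k : A)

variable {p}

/-- The key auxiliary ideal: elements all of whose components in "symmetric" degrees
lie in `p`. -/
noncomputable def P2 (hp : p.IsPrime) : Ideal A where
  carrier := {x : A | ∀ k : ℤ, (∃ c ∈ 𝒜 (-k), c ∉ p) → dcomp 𝒜 x k ∈ p}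
  zero_mem' := by
    intro k _
    simp [dcomp]
  add_mem' := by
    intro x y hx hy k hk
    have : dcomp 𝒜 (x + y) k = dcomp 𝒜 x k + dcomp 𝒜 y k := by
      simp [dcomp, DirectSum.decompose_add, DirectSum.add_apply]
    rw [this]
    exact p.add_mem (hx k hk) (hy k hk)
  smul_mem' := by
    classical
    intro c x hx k hk
    obtain ⟨w, hw, hwp⟩ := hk
    simp only [smul_eq_mul, Set.mem_setOf_eq]
    have hmul : dcomp 𝒜 (c * x) k =
        ∑ ij ∈ ((DirectSum.decompose 𝒜 c).support ×ˢ
            (DirectSum.decompose 𝒜 x).support).filter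
            (fun ij : ℤ × ℤ => ij.1 + ij.2 = k),
          dcomp 𝒜 c ij.1 * dcomp 𝒜 x ij.2 := by
      simp only [dcomp, DirectSum.decompose_mul]
      exact DirectSum.coe_mul_apply 𝒜 _ _ k
    rw [hmul]
    refine Ideal.sum_mem _ (fun ij hij => ?_)
    simp only [Finset.mem_filter, Finset.mem_product] at hij
    obtain ⟨⟨-, -⟩, hsum⟩ := hij
    by_cases h2 : dcomp 𝒜 x ij.2 ∈ p
    · exact p.mul_mem_left _ h2
    · by_cases h1 : dcomp 𝒜 c ij.1 ∈ p
      · exact p.mul_mem_right _ h1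
      · -- derive a contradiction
        exfalso
        -- x ∈ P2-carrier so ¬ (∃ c ∈ 𝒜 (-ij.2), c ∉ p)
        have hC2 : ∀ z ∈ 𝒜 (-ij.2), z ∈ p := by
          by_contra hcon
          push_neg at hcon
          obtain ⟨z, hz, hzp⟩ := hcon
          exact h2 (hx ij.2 ⟨z, hz, hzp⟩)
        have hzmem : w * dcomp 𝒜 c ij.1 ∈ 𝒜 (-k + ij.1) :=
          SetLike.mul_mem_graded hw (SetLike.coe_mem _)
        have heq : -k + ij.1 = -ij.2 := by omega
        rw [heq] at hzmem
        have : w * dcomp 𝒜 c ij.1 ∈ p := hC2 _ hzmem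
        rcases hp.mem_or_mem this with h | h
        · exact hwp h
        · exact h1 h

lemma mem_P2_iff (hp : p.IsPrime) (x : A) :
    x ∈ P2 𝒜 hp ↔ ∀ k : ℤ, (∃ c ∈ 𝒜 (-k), c ∉ p) → dcomp 𝒜 x k ∈ p :=
  Iff.rfl

lemma le_P2 (hp : p.IsPrime) (hph : p.IsHomogeneous 𝒜) : p ≤ P2 𝒜 hp := by
  intro x hx k _
  exact hph k hx

lemma P2_isHomogeneous (hp : p.IsPrime) : (P2 𝒜 hp).IsHomogeneous 𝒜 := by
  intro i x hx
  rw [mem_P2_iff]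
  intro k hk
  by_cases h : i = k
  · subst h
    rw [dcomp, DirectSum.decompose_of_mem_same 𝒜 (SetLike.coe_mem _)]
    exact hx i hk
  · rw [dcomp, DirectSum.decompose_of_mem_ne 𝒜 (SetLike.coe_mem _) h]
    exact p.zero_mem

lemma P2_isPrime (hp : p.IsPrime) : (P2 𝒜 hp).IsPrime := by
  classical
  constructor
  · intro htop
    have h1 : (1 : A) ∈ P2 𝒜 hp := htop ▸ Submodule.mem_top
    have := h1 0 ⟨1, by simpa using SetLike.one_mem_graded 𝒜,
      fun h => hp.ne_top ((Ideal.eq_top_iff_one p).2 h)⟩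
    rw [dcomp, DirectSum.decompose_of_mem_same 𝒜 (SetLike.one_mem_graded 𝒜)] at this
    exact hp.ne_top ((Ideal.eq_top_iff_one p).2 this)
  · intro x y hxy
    by_contra hc
    push_neg at hc
    obtain ⟨hx, hy⟩ := hc
    simp only [mem_P2_iff, not_forall] at hx hy
    obtain ⟨kx, Ckx, hkx⟩ := hx
    obtain ⟨ky, Cky, hky⟩ := hy
    -- supports and maxima
    set Sx := ((DirectSum.decompose 𝒜 x).support.filter
      (fun j => (∃ c ∈ 𝒜 (-j), c ∉ p) ∧ dcomp 𝒜 x j ∉ p)) with hSx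
    set Sy := ((DirectSum.decompose 𝒜 y).support.filter
      (fun j => (∃ c ∈ 𝒜 (-j), c ∉ p) ∧ dcomp 𝒜 y j ∉ p)) with hSy
    have hxmem : kx ∈ Sx := by
      rw [hSx, Finset.mem_filter]
      refine ⟨DFinsupp.mem_support_iff.2 ?_, Ckx, hkx⟩
      intro h0
      apply hkx
      rw [dcomp, h0]
      simpa using p.zero_mem
    have hymem : ky ∈ Sy := by
      rw [hSy, Finset.mem_filter]
      refine ⟨DFinsupp.mem_support_iff.2 ?_, Cky, hky⟩
      intro h0
      apply hky
      rw [dcomp, h0]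
      simpa using p.zero_mem
    have hSxne : Sx.Nonempty := ⟨kx, hxmem⟩
    have hSyne : Sy.Nonempty := ⟨ky, hymem⟩
    set h := Sx.max' hSxne with hh
    set h' := Sy.max' hSyne with hh'
    have hhSx : h ∈ Sx := Sx.max'_mem hSxne
    have hhSy : h' ∈ Sy := Sy.max'_mem hSyne
    rw [hSx, Finset.mem_filter] at hhSx
    rw [hSy, Finset.mem_filter] at hhSy
    obtain ⟨hhsup, ⟨wx, hwx, hwxp⟩, hxh⟩ := hhSx
    obtain ⟨hhsup', ⟨wy, hwy, hwyp⟩, hyh⟩ := hhSy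
    -- C (h + h')
    have hCk : ∃ c ∈ 𝒜 (-(h + h')), c ∉ p := by
      refine ⟨wx * wy, ?_, fun hm => (hp.mem_or_mem hm).elim hwxp hwyp⟩
      have := SetLike.mul_mem_graded hwx hwy
      have heq : -h + -h' = -(h + h') := by omega
      rwa [heq] at this
    have hsum0 : dcomp 𝒜 (x * y) (h + h') ∈ p := hxy (h + h') hCk
    have hmul : dcomp 𝒜 (x * y) (h + h') =
        ∑ ij ∈ ((DirectSum.decompose 𝒜 x).support ×ˢ
            (DirectSum.decompose 𝒜 y).support).filter
            (fun ij : ℤ × ℤ => ij.1 + ij.2 = h + h'),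
          dcomp 𝒜 x ij.1 * dcomp 𝒜 y ij.2 := by
      simp only [dcomp, DirectSum.decompose_mul]
      exact DirectSum.coe_mul_apply 𝒜 _ _ _
    rw [hmul] at hsum0
    have hmempair : (h, h') ∈ ((DirectSum.decompose 𝒜 x).support ×ˢ
        (DirectSum.decompose 𝒜 y).support).filter
        (fun ij : ℤ × ℤ => ij.1 + ij.2 = h + h') := by
      rw [Finset.mem_filter, Finset.mem_product]
      exact ⟨⟨hhsup, hhsup'⟩, rfl⟩
    rw [← Finset.add_sum_erase _ _ hmempair] at hsum0
    have hrest : ∑ ij ∈ (((DirectSum.decompose 𝒜 x).support ×ˢ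
        (DirectSum.decompose 𝒜 y).support).filter
        (fun ij : ℤ × ℤ => ij.1 + ij.2 = h + h')).erase (h, h'),
          dcomp 𝒜 x ij.1 * dcomp 𝒜 y ij.2 ∈ p := by
      refine Ideal.sum_mem _ (fun ij hij => ?_)
      rw [Finset.mem_erase, Finset.mem_filter, Finset.mem_product] at hij
      obtain ⟨hne, ⟨hij1, hij2⟩, hijsum⟩ := hij
      by_contra hterm
      have hx1 : dcomp 𝒜 x ij.1 ∉ p := fun hm => hterm (p.mul_mem_right _ hm)
      have hy2 : dcomp 𝒜 y ij.2 ∉ p := fun hm => hterm (p.mul_mem_left _ hm)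
      obtain ⟨wk, hwk, hwkp⟩ := hCk
      -- C ij.1 holds
      have hC1 : ∃ c ∈ 𝒜 (-ij.1), c ∉ p := by
        refine ⟨dcomp 𝒜 y ij.2 * wk, ?_, ?_⟩
        · have := SetLike.mul_mem_graded (SetLike.coe_mem
            ((DirectSum.decompose 𝒜 y) ij.2)) hwk
          have heq : ij.2 + -(h + h') = -ij.1 := by omega
          rwa [heq] at this
        · intro hm
          exact (hp.mem_or_mem hm).elim hy2 hwkp
      have hC2 : ∃ c ∈ 𝒜 (-ij.2), c ∉ p := by
        refine ⟨dcomp 𝒜 x ij.1 * wk, ?_, ?_⟩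
        · have := SetLike.mul_mem_graded (SetLike.coe_mem
            ((DirectSum.decompose 𝒜 x) ij.1)) hwk
          have heq : ij.1 + -(h + h') = -ij.2 := by omega
          rwa [heq] at this
        · intro hm
          exact (hp.mem_or_mem hm).elim hx1 hwkp
      have hmem1 : ij.1 ∈ Sx := by
        rw [hSx, Finset.mem_filter]
        exact ⟨hij1, hC1, hx1⟩
      have hmem2 : ij.2 ∈ Sy := by
        rw [hSy, Finset.mem_filter]
        exact ⟨hij2, hC2, hy2⟩
      have hle1 : ij.1 ≤ h := Finset.le_max' _ _ hmem1
      have hle2 : ij.2 ≤ h' := Finset.le_max' _ _ hmem2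
      have : ij.1 = h ∧ ij.2 = h' := by omega
      exact hne (Prod.ext this.1 this.2)
    have hlead : dcomp 𝒜 x h * dcomp 𝒜 y h' ∈ p := by
      have := Ideal.sub_mem p hsum0 hrest
      simpa using this
    exact (hp.mem_or_mem hlead).elim hxh hyh

end P2sec

section Main

variable {A : Type*} [CommRing A] (𝒜 : ℤ → AddSubgroup A) [GradedRing 𝒜]

lemma good_key
    (h1 : ∀ p : Ideal A, p.IsPrime → p.IsHomogeneous 𝒜 →
        ∀ T : Submonoid A, (T : Set A) = {a : A | (∃ d : ℤ, a ∈ 𝒜 d) ∧ a ∉ p} →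
          LocGood 𝒜 T)
    (p : Ideal A) (hp : p.IsPrime) (hph : p.IsHomogeneous 𝒜) (d : ℤ)
    (hd : ∀ a ∈ 𝒜 d, a ∈ p) : ∀ b ∈ 𝒜 (-d), b ∈ p := by
  intro b hb
  by_contra hbp
  have hP2p := P2_isPrime 𝒜 hp
  have hP2h := P2_isHomogeneous 𝒜 hp
  have hpleP2 := le_P2 𝒜 hp hph
  -- b ∈ P2
  have hbP2 : b ∈ P2 𝒜 hp := by
    rw [mem_P2_iff]
    intro k hk
    by_cases hkd : k = -d
    · subst hkd
      obtain ⟨c, hc, hcp⟩ := hk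
      rw [neg_neg] at hc
      exact absurd (hd c hc) hcp
    · rw [dcomp, DirectSum.decompose_of_mem_ne 𝒜 hb (fun h => hkd h.symm)]
      exact p.zero_mem
  set T : Submonoid A := homT 𝒜 (P2 𝒜 hp) hP2p with hT
  have hTset : (T : Set A) = {a : A | (∃ d : ℤ, a ∈ 𝒜 d) ∧ a ∉ P2 𝒜 hp} := rfl
  have hgood := h1 (P2 𝒜 hp) hP2p hP2h T hTset
  have hTp : ∀ t ∈ T, t ∉ p := fun t ht hmem => ht.2 (hpleP2 hmem)
  have hTP2 : ∀ t ∈ T, t ∉ P2 𝒜 hp := fun t ht => ht.2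
  set Q1 := p.map (algebraMap A (Localization T)) with hQ1
  set Q2 := (P2 𝒜 hp).map (algebraMap A (Localization T)) with hQ2
  have hQ1p : Q1.IsPrime := by
    refine IsLocalization.isPrime_of_isPrime_disjoint T _ p hp ?_
    rw [Set.disjoint_left]
    exact fun t ht => hTp t ht
  have hQ2p : Q2.IsPrime := by
    refine IsLocalization.isPrime_of_isPrime_disjoint T _ _ hP2p ?_
    rw [Set.disjoint_left]
    exact fun t ht => hTP2 t ht
  have heq : Q1 = Q2 := by
    refine hgood Q1 Q2 hQ1p hQ2p (locHomog_of_map 𝒜 hph) (locHomog_of_map 𝒜 hP2h) ?_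
    rintro x ⟨a, s, i, ha, hs, rfl⟩
    rw [zero_add] at ha
    rw [hQ1, hQ2, mk_mem_map_iff hp hTp a s, mk_mem_map_iff hP2p hTP2 a s]
    constructor
    · exact fun h => hpleP2 h
    · intro haP2
      by_cases hCi : ∃ c ∈ 𝒜 (-i), c ∉ p
      · have := haP2 i hCi
        rwa [dcomp, DirectSum.decompose_of_mem_same 𝒜 ha] at this
      · exfalso
        apply hTP2 (s : A) s.2
        rw [mem_P2_iff]
        intro k hk
        by_cases hki : k = i
        · subst hki
          exact absurd hk hCi
        · rw [dcomp, DirectSum.decompose_of_mem_ne 𝒜 hs (fun h => hki h.symm)]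
          exact p.zero_mem
  -- contradiction: b ∈ P2 gives mk b 1 ∈ Q2 = Q1 gives b ∈ p
  have : Localization.mk b (1 : T) ∈ Q2 :=
    (mk_mem_map_iff hP2p hTP2 b 1).2 hbP2
  rw [← heq, hQ1, mk_mem_map_iff hp hTp b 1] at this
  exact hbp this

end Main


/-- If all graded localizations `A_p` at homogeneous primes `p` are good
(resp. quasi-trivial, resp. trivial), then `A` is good (resp. quasi-trivial, trivial). -/
theorem stmt_10 {A : Type*} [CommRing A] (𝒜 : ℤ → AddSubgroup A) [GradedRing 𝒜] :
    ((∀ p : Ideal A, p.IsPrime → p.IsHomogeneous 𝒜 →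
        ∀ T : Submonoid A, (T : Set A) = {a : A | (∃ d : ℤ, a ∈ 𝒜 d) ∧ a ∉ p} →
          LocGood 𝒜 T) →
      ∀ p : Ideal A, p.IsPrime → p.IsHomogeneous 𝒜 →
        ∀ d : ℤ, ((∀ a ∈ 𝒜 d, a ∈ p) ↔ (∀ a ∈ 𝒜 (-d), a ∈ p))) ∧
    ((∀ p : Ideal A, p.IsPrime → p.IsHomogeneous 𝒜 →
        ∀ T : Submonoid A, (T : Set A) = {a : A | (∃ d : ℤ, a ∈ 𝒜 d) ∧ a ∉ p} →
          LocQuasiTrivial 𝒜 T) →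
      ∀ d : ℤ, d ≠ 0 → ∀ a ∈ 𝒜 d, IsNilpotent a) ∧
    ((∀ p : Ideal A, p.IsPrime → p.IsHomogeneous 𝒜 →
        ∀ T : Submonoid A, (T : Set A) = {a : A | (∃ d : ℤ, a ∈ 𝒜 d) ∧ a ∉ p} →
          LocTrivial 𝒜 T) →
      ∀ d : ℤ, d ≠ 0 → ∀ a ∈ 𝒜 d, a = 0) := by
  refine ⟨?good, ?qt, ?triv⟩
  case good =>
    intro h1 p hp hph d
    constructor
    · exact fun hd => good_key 𝒜 h1 p hp hph d hd
    · intro hd a ha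
      have := good_key 𝒜 h1 p hp hph (-d) hd
      rw [neg_neg] at this
      exact this a ha
  case qt =>
    intro h2 d hd a ha
    by_contra hnil
    have hnrad : a ∉ nilradical A := fun h => hnil (mem_nilradical.1 h)
    have hex : ∃ J : Ideal A, J.IsPrime ∧ a ∉ J := by
      by_contra hcon
      push_neg at hcon
      apply hnrad
      rw [nilradical_eq_sInf]
      exact Ideal.mem_sInf.2 fun {J} hJ => hcon J hJ
    obtain ⟨J, hJ, haJ⟩ := hex
    set q := (J.homogeneousCore 𝒜).toIdeal with hq
    have hqp : q.IsPrime := hJ.homogeneousCore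
    have hqh : q.IsHomogeneous 𝒜 := HomogeneousIdeal.isHomogeneous _
    have haq : a ∉ q := fun h => haJ (Ideal.toIdeal_homogeneousCore_le 𝒜 J h)
    set T : Submonoid A := homT 𝒜 q hqp with hT
    have hqt := h2 q hqp hqh T rfl
    have hgr : Localization.mk a (1 : T) ∈ LocGrade 𝒜 T d :=
      ⟨a, 1, 0, by rw [add_zero]; exact ha, SetLike.one_mem_graded 𝒜, rfl⟩
    obtain ⟨n, hn⟩ := hqt d hd _ hgr
    rw [Localization.mk_one_eq_algebraMap, ← map_pow] at hn
    obtain ⟨m, hm⟩ := (IsLocalization.map_eq_zero_iff T _ _).1 hn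
    have : (m : A) * a ^ n ∈ q := by rw [hm]; exact q.zero_mem
    rcases hqp.mem_or_mem this with h | h
    · exact m.2.2 h
    · exact haq (hqp.mem_of_pow_mem n h)
  case triv =>
    intro h3 d hd a ha
    by_contra hne
    -- annihilator-style ideal
    set I : Ideal A :=
      { carrier := {t : A | t * a = 0}
        zero_mem' := by simp
        add_mem' := by
          intro s t hs ht
          simp only [Set.mem_setOf_eq] at *
          rw [add_mul, hs, ht, add_zero]
        smul_mem' := by
          intro c t ht
          simp only [Set.mem_setOf_eq, smul_eq_mul] at *
          rw [mul_assoc, ht, mul_zero] } with hI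
    have hIne : I ≠ ⊤ := by
      intro htop
      have : (1 : A) ∈ I := htop ▸ Submodule.mem_top
      simp only [hI, Submodule.mem_mk, AddSubmonoid.mem_mk, AddSubsemigroup.mem_mk,
        Set.mem_setOf_eq, one_mul] at this
      exact hne this
    obtain ⟨M, hM, hIM⟩ := Ideal.exists_le_maximal I hIne
    set q := (M.homogeneousCore 𝒜).toIdeal with hq
    have hqp : q.IsPrime := hM.isPrime.homogeneousCore
    have hqh : q.IsHomogeneous 𝒜 := HomogeneousIdeal.isHomogeneous _
    set T : Submonoid A := homT 𝒜 q hqp with hT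
    have htr := h3 q hqp hqh T rfl
    have hgr : Localization.mk a (1 : T) ∈ LocGrade 𝒜 T d :=
      ⟨a, 1, 0, by rw [add_zero]; exact ha, SetLike.one_mem_graded 𝒜, rfl⟩
    have h0 := htr d hd _ hgr
    rw [Localization.mk_one_eq_algebraMap] at h0
    obtain ⟨m, hm⟩ := (IsLocalization.map_eq_zero_iff T _ _).1 h0
    -- m is homogeneous and m * a = 0, so m ∈ I ≤ M, hence m ∈ homogeneousCore
    have hmI : (m : A) ∈ I := hm
    have hmM : (m : A) ∈ M := hIM hmI
    have hmq : (m : A) ∈ q :=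
      Ideal.mem_homogeneousCore_of_homogeneous_of_mem m.2.1 hmM
    exact m.2.2 hmq
end

section
/- Let A be a Z-graded commutative ring and p a homogeneous prime such that the graded localization A_p is quasi-standard (respectively standard). Then there exists a homogeneous element t ∈ A \ p such that the localization A_t is quasi-standard (respectively standard). If moreover A is good, t can be chosen of degree 0. -/
/-!
A unit `a/s` of degree `d` in `A_p` has `a` and `s` homogeneous and outside `p`, so for
`t = a s c` (any homogeneous `c`) the fraction `a a c / t = a/s` is a unit of degree `d` in `A_t`.
Taking `c = 1` gives the first two claims. For `t` of degree `0` one needs `c` of degree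
`-deg(a s)` with `a s c ∉ p`. If no such `c` exists, the homogeneous ideal `p + (A_{deg(a s)})`
has the same degree-zero part as `p`; extending it to a prime avoiding `A_0 \ p` and taking the
homogeneous core gives a homogeneous prime that agrees with `p` in degree `0`, hence equals `p`
when `A` is good. It then contains `a s`, which is a contradiction.
-/

theorem Localization.isUnit_mk_iff {A : Type*} [CommRing A] {S : Submonoid A} {a : A} {s : S} :
    IsUnit (Localization.mk a s) ↔ ∃ u ∈ S, a ∣ u := by
  rw [Localization.mk_eq_mk', ← IsLocalization.algebraMap_isUnit_iff S (S := Localization S),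
    ← (IsLocalization.map_units (Localization S) s).mul_right_iff, IsLocalization.mk'_spec]

section LocGrade

variable {A σ : Type*} [CommRing A] [SetLike σ A] {𝒜 : ℤ → σ}

def HasUnitOfDegree (𝒜 : ℤ → σ) (S : Submonoid A) (d : ℤ) : Prop :=
  ∃ x ∈ LocGrade 𝒜 S d, IsUnit x

theorem exists_mul_notMem_of_hasUnitOfDegree {p : Ideal A} (hp : p.IsPrime) {T : Submonoid A}
    (hT : Disjoint (T : Set A) p) {d : ℤ} (h : HasUnitOfDegree 𝒜 T d) :
    ∃ (i : ℤ) (a s : A), a ∈ 𝒜 (d + i) ∧ s ∈ 𝒜 i ∧ a * s ∉ p := by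
  obtain ⟨_, ⟨a, s, i, ha, hs, rfl⟩, hu⟩ := h
  obtain ⟨u, huT, b, rfl⟩ := Localization.isUnit_mk_iff.1 hu
  refine ⟨i, a, s, ha, hs, fun has => ?_⟩
  rcases hp.mem_or_mem has with hap | hsp
  · exact Set.disjoint_left.1 hT huT (p.mul_mem_right b hap)
  · exact Set.disjoint_left.1 hT s.2 hsp

theorem hasUnitOfDegree_powers_mul [SetLike.GradedMonoid 𝒜] {d i k : ℤ} {a s c : A}
    (ha : a ∈ 𝒜 (d + i)) (hs : s ∈ 𝒜 i) (hc : c ∈ 𝒜 k) :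
    HasUnitOfDegree 𝒜 (Submonoid.powers (a * s * c)) d := by
  refine ⟨Localization.mk (a * a * c) ⟨a * s * c, Submonoid.mem_powers _⟩,
    ⟨a * a * c, _, d + i + i + k, ?_, SetLike.mul_mem_graded (SetLike.mul_mem_graded ha hs) hc,
      rfl⟩, Localization.isUnit_mk_iff.2 ⟨(a * s * c) ^ 2, ⟨2, rfl⟩, s * s * c, by ring⟩⟩
  convert SetLike.mul_mem_graded (SetLike.mul_mem_graded ha ha) hc using 2
  ring

theorem exists_away_hasUnitOfDegree [SetLike.GradedMonoid 𝒜] {p : Ideal A} (hp : p.IsPrime)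
    {T : Submonoid A} (hT : Disjoint (T : Set A) p) {d : ℤ} (h : HasUnitOfDegree 𝒜 T d) :
    ∃ t : A, (∃ e : ℤ, t ∈ 𝒜 e) ∧ t ∉ p ∧ HasUnitOfDegree 𝒜 (Submonoid.powers t) d := by
  obtain ⟨i, a, s, ha, hs, hasp⟩ := exists_mul_notMem_of_hasUnitOfDegree hp hT h
  have h1 : (1 : A) ∈ 𝒜 0 := SetLike.one_mem_graded 𝒜
  exact ⟨a * s * 1, ⟨_, SetLike.mul_mem_graded (SetLike.mul_mem_graded ha hs) h1⟩,
    by rwa [mul_one], hasUnitOfDegree_powers_mul ha hs h1⟩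

end LocGrade

section Good

variable {A σ : Type*} [CommRing A] [SetLike σ A] [AddSubmonoidClass σ A] (𝒜 : ℤ → σ)
  [GradedRing 𝒜]

def IsGoodGrading : Prop :=
  ∀ q q' : Ideal A, q.IsPrime → q'.IsPrime → q.IsHomogeneous 𝒜 → q'.IsHomogeneous 𝒜 →
    (∀ a ∈ 𝒜 0, (a ∈ q ↔ a ∈ q')) → q = q'

variable {𝒜}

theorem IsGoodGrading.eq_of_le (hgood : IsGoodGrading 𝒜) {p I : Ideal A} (hp : p.IsPrime)
    (hph : p.IsHomogeneous 𝒜) (hI : I.IsHomogeneous 𝒜) (hpI : p ≤ I)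
    (hI0 : ∀ x ∈ I, x ∈ 𝒜 0 → x ∈ p) : I = p := by
  let S₀ := SetLike.GradeZero.submonoid 𝒜 ⊓ p.primeCompl
  have hdisj : Disjoint (I : Set A) S₀ :=
    Set.disjoint_left.2 fun x hxI hxS => hxS.2 (hI0 x hxI hxS.1)
  obtain ⟨P, hP, hIP, hPS⟩ := Ideal.exists_le_prime_disjoint I S₀ hdisj
  have hIq : I ≤ (P.homogeneousCore 𝒜).toIdeal :=
    hI.toIdeal_homogeneousCore_eq_self ▸ Ideal.homogeneousCore_mono 𝒜 hIP
  have hq : (P.homogeneousCore 𝒜).toIdeal = p := by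
    refine hgood _ p hP.homogeneousCore hp (HomogeneousIdeal.isHomogeneous _) hph fun x hx0 => ?_
    refine ⟨fun hxq => ?_, fun hxp => hIq (hpI hxp)⟩
    by_contra hxp
    exact Set.disjoint_left.1 hPS (Ideal.toIdeal_homogeneousCore_le 𝒜 P hxq) ⟨hx0, hxp⟩
  exact le_antisymm (hq ▸ hIq) hpI

-- Stated for all multiples `r * y` so that the induction on `y` passes through `a • y`.
theorem coe_decompose_mul_zero_mem_of_mem_span {p : Ideal A} {m : ℤ}
    (hp : ∀ c ∈ 𝒜 (-m), c ∈ p) {y : A} (hy : y ∈ Ideal.span (𝒜 m : Set A)) (r : A) :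
    (DirectSum.decompose 𝒜 (r * y) 0 : A) ∈ p := by
  induction hy using Submodule.span_induction generalizing r with
  | mem x hx =>
    rw [← neg_add_cancel m, DirectSum.coe_decompose_mul_add_of_right_mem 𝒜 hx]
    exact p.mul_mem_right _ (hp _ (SetLike.coe_mem _))
  | zero => simp
  | add x z _ _ hx hz =>
    rw [mul_add, DirectSum.decompose_add, DirectSum.add_apply, AddMemClass.coe_add]
    exact p.add_mem (hx r) (hz r)
  | smul a x _ hx =>
    rw [smul_eq_mul, ← mul_assoc]
    exact hx (r * a)

theorem IsGoodGrading.exists_mul_notMem (hgood : IsGoodGrading 𝒜) {p : Ideal A}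
    (hp : p.IsPrime) (hph : p.IsHomogeneous 𝒜) {m : ℤ} {w : A} (hw : w ∈ 𝒜 m) (hwp : w ∉ p) :
    ∃ c ∈ 𝒜 (-m), w * c ∉ p := by
  by_contra! h
  have hsub : ∀ c ∈ 𝒜 (-m), c ∈ p := fun c hc => (hp.mem_or_mem (h c hc)).resolve_left hwp
  have hI0 : ∀ x ∈ p ⊔ Ideal.span (𝒜 m : Set A), x ∈ 𝒜 0 → x ∈ p := by
    intro x hx hx0
    obtain ⟨π, hπ, y, hy, rfl⟩ := Submodule.mem_sup.1 hx
    rw [← DirectSum.decompose_of_mem_same 𝒜 hx0, DirectSum.decompose_add, DirectSum.add_apply,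
      AddMemClass.coe_add]
    simpa only [one_mul] using
      p.add_mem (hph 0 hπ) (coe_decompose_mul_zero_mem_of_mem_span hsub hy 1)
  have hI := hgood.eq_of_le hp hph (hph.sup (Ideal.homogeneous_span 𝒜 _ fun x hx => ⟨m, hx⟩))
    le_sup_left hI0
  exact hwp (hI ▸ Ideal.mem_sup_right (Ideal.subset_span hw))

theorem IsGoodGrading.exists_away_hasUnitOfDegree (hgood : IsGoodGrading 𝒜) {p : Ideal A}
    (hp : p.IsPrime) (hph : p.IsHomogeneous 𝒜) {T : Submonoid A} (hT : Disjoint (T : Set A) p)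
    {d : ℤ} (h : HasUnitOfDegree 𝒜 T d) :
    ∃ t ∈ 𝒜 0, t ∉ p ∧ HasUnitOfDegree 𝒜 (Submonoid.powers t) d := by
  obtain ⟨i, a, s, ha, hs, hasp⟩ := exists_mul_notMem_of_hasUnitOfDegree hp hT h
  have has : a * s ∈ 𝒜 (d + i + i) := SetLike.mul_mem_graded ha hs
  obtain ⟨c, hc, htp⟩ := hgood.exists_mul_notMem hp hph has hasp
  refine ⟨a * s * c, ?_, htp, hasUnitOfDegree_powers_mul ha hs hc⟩
  simpa only [add_neg_cancel] using SetLike.mul_mem_graded has hc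

end Good

/-- If the graded localization `A_p` at a homogeneous prime `p` is
quasi-standard (resp. standard), then there is a homogeneous `t ∉ p` with `A_t`
quasi-standard (resp. standard); if moreover `A` is good, `t` can be chosen of degree `0`. -/
theorem stmt_11 {A : Type*} [CommRing A] (𝒜 : ℤ → AddSubgroup A) [GradedRing 𝒜]
    (p : Ideal A) (hp : p.IsPrime) (hph : p.IsHomogeneous 𝒜) :
    ∀ T : Submonoid A, (T : Set A) = {a : A | (∃ d : ℤ, a ∈ 𝒜 d) ∧ a ∉ p} →
      ((LocQuasiStandard 𝒜 T →
          ∃ t : A, (∃ d : ℤ, t ∈ 𝒜 d) ∧ t ∉ p ∧ LocQuasiStandard 𝒜 (Submonoid.powers t)) ∧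
       (LocStandard 𝒜 T →
          ∃ t : A, (∃ d : ℤ, t ∈ 𝒜 d) ∧ t ∉ p ∧ LocStandard 𝒜 (Submonoid.powers t)) ∧
       ((∀ q q' : Ideal A, q.IsPrime → q'.IsPrime → q.IsHomogeneous 𝒜 → q'.IsHomogeneous 𝒜 →
           (∀ a ∈ 𝒜 0, (a ∈ q ↔ a ∈ q')) → q = q') →
         (LocQuasiStandard 𝒜 T →
            ∃ t ∈ 𝒜 0, t ∉ p ∧ LocQuasiStandard 𝒜 (Submonoid.powers t)) ∧
         (LocStandard 𝒜 T →
            ∃ t ∈ 𝒜 0, t ∉ p ∧ LocStandard 𝒜 (Submonoid.powers t)))) := by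
  intro T hT
  have hTp : Disjoint (T : Set A) p := by
    rw [hT]
    exact Set.disjoint_left.2 fun a ha => ha.2
  refine ⟨fun ⟨d, hd, h⟩ => ?_, exists_away_hasUnitOfDegree hp hTp,
    fun hgood =>
      ⟨fun ⟨d, hd, h⟩ => ?_, IsGoodGrading.exists_away_hasUnitOfDegree hgood hp hph hTp⟩⟩
  · obtain ⟨t, ht, htp, h'⟩ := exists_away_hasUnitOfDegree hp hTp h
    exact ⟨t, ht, htp, d, hd, h'⟩
  · obtain ⟨t, ht, htp, h'⟩ := IsGoodGrading.exists_away_hasUnitOfDegree hgood hp hph hTp h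
    exact ⟨t, ht, htp, d, hd, h'⟩
end

section
/- For a Z-graded commutative ring A the following are equivalent: (1) A_0 is a noetherian ring and A is a finitely generated A_0-algebra; (2) A is a noetherian ring; (3) A satisfies the ascending chain condition on homogeneous ideals (equivalently, every homogeneous ideal of A is finitely generated). Moreover, if these hold and M is a finitely generated graded A-module, then each graded piece M_d is a finitely generated A_0-module. -/
/-!
If `z ∈ M_d` lies in the `A`-span of homogeneous elements `x`, taking degree-`d` components of
`z = ∑ cₓ • x` gives `z = ∑ (cₓ)_{d - deg x} • x`. Applied to the homogeneous ideals `A · A_d` and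
`A · J` (for `J` an ideal of `A₀`), this makes each `A_d` a finitely generated `A₀`-module and
`A₀` noetherian. For finite type, take finitely many homogeneous generators of the ideals generated
by `A_{>0}` and by `A_{<0}`, of degrees at most `K` in absolute value: for `|d| > K` the formula
expresses `A_d` through pieces of smaller `|degree|`, so these generators together with
`A₀`-generators of the `A_d`, `|d| ≤ K`, generate `A` over `A₀`. Hilbert's basis theorem does the
rest.
-/

open DirectSum

section GradedModule

variable {A M : Type*} [CommRing A] [AddCommGroup M] [Module A M]
  (𝒜 : ℤ → AddSubgroup A) [GradedRing 𝒜]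
  (ℳ : ℤ → AddSubgroup M) [Decomposition ℳ] [SetLike.GradedSMul 𝒜 ℳ]

theorem coe_decompose_smul_of_mem (a : A) {x : M} {e : ℤ} (hx : x ∈ ℳ e) (d : ℤ) :
    (decompose ℳ (a • x) d : M) = (decompose 𝒜 a (d - e) : A) • x := by
  induction a using Decomposition.inductionOn 𝒜 with
  | zero => simp
  | @homogeneous i b =>
    have hbx : (b : A) • x ∈ ℳ (i + e) := SetLike.GradedSMul.smul_mem b.2 hx
    by_cases h : i + e = d
    · subst h
      rw [decompose_of_mem_same ℳ hbx, add_sub_cancel_right, decompose_coe, of_eq_same]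
    · rw [decompose_of_mem_ne ℳ hbx h, decompose_of_mem_ne 𝒜 b.2 (by omega), zero_smul]
  | add a a' ha ha' =>
    simp only [add_smul, decompose_add, DirectSum.add_apply, AddSubgroup.coe_add, ha, ha']

variable {𝒜 ℳ} in
theorem mem_closure_smul_of_mem_span {S : Set M} {deg : M → ℤ} (hS : ∀ x ∈ S, x ∈ ℳ (deg x))
    {d : ℤ} {z : M} (hz : z ∈ ℳ d) (hzS : z ∈ Submodule.span A S) :
    z ∈ AddSubgroup.closure {y | ∃ x ∈ S, ∃ a ∈ 𝒜 (d - deg x), y = a • x} := by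
  obtain ⟨c, hcS, rfl⟩ := Submodule.mem_span_set.mp hzS
  rw [← decompose_of_mem_same ℳ hz, Finsupp.sum, decompose_sum, DFinsupp.finsetSum_apply,
    AddSubgroup.val_finsetSum]
  refine AddSubgroup.sum_mem _ fun x hx => AddSubgroup.subset_closure ?_
  exact ⟨x, hcS hx, _, SetLike.coe_mem _, coe_decompose_smul_of_mem 𝒜 ℳ _ (hS x (hcS hx)) d⟩

variable {𝒜 ℳ} in
theorem mem_closure_gradeZero_smul_of_mem_span {S : Set M} {d : ℤ} (hS : S ⊆ ℳ d) {z : M}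
    (hz : z ∈ ℳ d) (hzS : z ∈ Submodule.span A S) :
    z ∈ AddSubgroup.closure {y | ∃ a ∈ 𝒜 0, ∃ x ∈ S, y = a • x} := by
  refine AddSubgroup.closure_mono ?_ (mem_closure_smul_of_mem_span (𝒜 := 𝒜) hS hz hzS)
  rintro y ⟨x, hx, a, ha, rfl⟩
  exact ⟨a, by rwa [sub_self] at ha, x, hx, rfl⟩

theorem exists_finset_gradeZero_generators {d : ℤ} (h : (Submodule.span A (ℳ d : Set M)).FG) :
    ∃ s : Finset M, ↑s ⊆ (ℳ d : Set M) ∧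
      ∀ m ∈ ℳ d, m ∈ AddSubgroup.closure {y | ∃ a ∈ 𝒜 0, ∃ x ∈ s, y = a • x} := by
  obtain ⟨s, hsd, hspan⟩ := (Submodule.fg_span_iff_fg_span_finset_subset _).mp h
  exact ⟨s, hsd, fun m hm =>
    mem_closure_gradeZero_smul_of_mem_span hsd hm (hspan ▸ Submodule.subset_span hm)⟩

end GradedModule

section GradedRing

variable {A : Type*} [CommRing A] (𝒜 : ℤ → AddSubgroup A) [GradedRing 𝒜]

theorem subring_closure_gradeZero_union_eq_adjoin (s : Set A) :
    Subring.closure ((𝒜 0 : Set A) ∪ s) = (Algebra.adjoin (𝒜 0) s).toSubring := by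
  rw [Algebra.adjoin_eq_ring_closure]
  congr
  ext
  simp

theorem exists_finset_subring_closure_eq_top_iff_finiteType :
    (∃ s : Finset A, Subring.closure ((𝒜 0 : Set A) ∪ ↑s) = ⊤) ↔ Algebra.FiniteType (𝒜 0) A := by
  simp only [subring_closure_gradeZero_union_eq_adjoin, Algebra.toSubring_eq_top]
  exact ⟨fun ⟨s, hs⟩ => ⟨⟨s, hs⟩⟩, fun ⟨⟨s, hs⟩⟩ => ⟨s, hs⟩⟩

variable {𝒜}

theorem isNoetherianRing_of_isNoetherianRing_gradeZero (h₀ : IsNoetherianRing (𝒜 0))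
    (hs : ∃ s : Finset A, Subring.closure ((𝒜 0 : Set A) ∪ ↑s) = ⊤) : IsNoetherianRing A :=
  have := (exists_finset_subring_closure_eq_top_iff_finiteType 𝒜).mp hs
  Algebra.FiniteType.isNoetherianRing (𝒜 0) A

theorem isNoetherianRing_gradeZero (hFG : ∀ I : Ideal A, I.IsHomogeneous 𝒜 → I.FG) :
    IsNoetherianRing (𝒜 0) := by
  classical
  refine (isNoetherianRing_iff_ideal_fg _).mpr fun J => ?_
  have hJ : (↑) '' (J : Set (𝒜 0)) ⊆ (𝒜 0 : Set A) := by rintro _ ⟨j, -, rfl⟩; exact j.2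
  obtain ⟨T, hTJ, hspan⟩ := (Submodule.fg_span_iff_fg_span_finset_subset _).mp
    (hFG _ (Ideal.homogeneous_span 𝒜 _ fun x hx => ⟨0, hJ hx⟩))
  obtain ⟨T₀, hT₀J, rfl⟩ := Finset.subset_set_image_iff.mp hTJ
  refine ⟨T₀, le_antisymm (Ideal.span_le.mpr hT₀J) fun z hz => ?_⟩
  have hzT := mem_closure_gradeZero_smul_of_mem_span (𝒜 := 𝒜) (hTJ.trans hJ) z.2
    (hspan ▸ Submodule.subset_span ⟨z, hz, rfl⟩)
  have hle : AddSubgroup.closure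
      {y | ∃ a ∈ 𝒜 0, ∃ x ∈ ((T₀.image Subtype.val : Finset A) : Set A), y = a • x} ≤
      (Ideal.span (T₀ : Set (𝒜 0))).toAddSubgroup.map (𝒜 0).subtype := by
    rw [AddSubgroup.closure_le]
    rintro _ ⟨a, ha, _, hx, rfl⟩
    rw [Finset.coe_image] at hx
    obtain ⟨x, hx, rfl⟩ := hx
    exact ⟨⟨a, ha⟩ * x, Ideal.mul_mem_left _ _ (Ideal.subset_span hx), rfl⟩
  obtain ⟨w, hw, hwz⟩ := hle hzT
  rwa [Subtype.ext hwz] at hw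

theorem mem_subring_of_mem_span_homogeneous {B : Subring A} {T : Set A} {deg : A → ℤ}
    (hT : ∀ x ∈ T, x ∈ 𝒜 (deg x)) (hTB : T ⊆ B) {d : ℤ}
    (hdeg : ∀ x ∈ T, (𝒜 (d - deg x) : Set A) ⊆ B) {z : A} (hz : z ∈ 𝒜 d)
    (hzT : z ∈ Ideal.span T) : z ∈ B := by
  refine (AddSubgroup.closure_le B.toAddSubgroup).mpr ?_
    (mem_closure_smul_of_mem_span (𝒜 := 𝒜) hT hz hzT)
  rintro _ ⟨x, hx, a, ha, rfl⟩
  exact B.mul_mem (hdeg x hx ha) (hTB hx)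

theorem exists_finset_homogeneous_span_of_degrees (hFG : ∀ I : Ideal A, I.IsHomogeneous 𝒜 → I.FG)
    (D : Set ℤ) : ∃ (T : Finset A) (deg : A → ℤ), (∀ x ∈ T, deg x ∈ D ∧ x ∈ 𝒜 (deg x)) ∧
      ∀ d ∈ D, (𝒜 d : Set A) ⊆ Ideal.span (T : Set A) := by
  let S : Set A := {x | ∃ e ∈ D, x ∈ 𝒜 e}
  obtain ⟨T, hTS, hspan⟩ := (Submodule.fg_span_iff_fg_span_finset_subset S).mp
    (hFG _ (Ideal.homogeneous_span 𝒜 S fun x ⟨e, _, hx⟩ => ⟨e, hx⟩))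
  choose! deg hdeg using fun x (hx : x ∈ (T : Set A)) => hTS hx
  exact ⟨T, deg, fun x hx => hdeg x hx, fun d hd x hx =>
    hspan.le (Submodule.subset_span ⟨d, hd, hx⟩)⟩

theorem exists_finset_grade_subset_subring_closure
    (hFG : ∀ I : Ideal A, I.IsHomogeneous 𝒜 → I.FG) (F : Finset ℤ) :
    ∃ s : Finset A, ∀ d ∈ F, (𝒜 d : Set A) ⊆ Subring.closure ((𝒜 0 : Set A) ∪ ↑s) := by
  classical
  choose G hG using fun d => (exists_finset_gradeZero_generators 𝒜 𝒜
    (hFG _ (Ideal.homogeneous_span 𝒜 _ fun x hx => ⟨d, hx⟩))).imp fun _ h => h.2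
  refine ⟨F.biUnion G, fun d hd z hz =>
    (AddSubgroup.closure_le (Subring.closure _).toAddSubgroup).mpr ?_ (hG d z hz)⟩
  rintro _ ⟨a, ha, x, hx, rfl⟩
  exact Subring.mul_mem _ (Subring.subset_closure (Or.inl ha))
    (Subring.subset_closure (Or.inr (Finset.mem_biUnion.mpr ⟨d, hd, hx⟩)))

theorem exists_finset_subring_closure_eq_top (hFG : ∀ I : Ideal A, I.IsHomogeneous 𝒜 → I.FG) :
    ∃ s : Finset A, Subring.closure ((𝒜 0 : Set A) ∪ ↑s) = ⊤ := by
  classical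
  obtain ⟨TP, degP, hTP, hspanP⟩ := exists_finset_homogeneous_span_of_degrees hFG (Set.Ioi 0)
  obtain ⟨TN, degN, hTN, hspanN⟩ := exists_finset_homogeneous_span_of_degrees hFG (Set.Iio 0)
  obtain ⟨K, hK⟩ := (TP.image (degP · |>.natAbs) ∪ TN.image (degN · |>.natAbs)).exists_le
  have hKP : ∀ x ∈ TP, (degP x).natAbs ≤ K := fun x hx =>
    hK _ (Finset.mem_union_left _ (Finset.mem_image_of_mem _ hx))
  have hKN : ∀ x ∈ TN, (degN x).natAbs ≤ K := fun x hx =>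
    hK _ (Finset.mem_union_right _ (Finset.mem_image_of_mem _ hx))
  obtain ⟨W, hW⟩ := exists_finset_grade_subset_subring_closure hFG (Finset.Icc (-K : ℤ) K)
  set B := Subring.closure ((𝒜 0 : Set A) ∪ ↑(TP ∪ TN ∪ W))
  have hB : ∀ n : ℕ, ∀ d : ℤ, d.natAbs = n → (𝒜 d : Set A) ⊆ B := by
    intro n
    induction n using Nat.strong_induction_on with | _ n ih => ?_
    rintro d rfl z hz
    by_cases hdK : d.natAbs ≤ K
    · refine Subring.closure_mono (Set.union_subset_union_right _ ?_)
        (hW d (Finset.mem_Icc.mpr (by omega)) hz)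
      exact Finset.coe_subset.mpr Finset.subset_union_right
    rcases lt_or_gt_of_ne (show d ≠ 0 by omega) with hd | hd
    · refine mem_subring_of_mem_span_homogeneous (fun x hx => (hTN x hx).2)
        (fun x hx => Subring.subset_closure (Or.inr (by simp [Finset.mem_coe.mp hx])))
        (fun x hx => ?_) hz (hspanN d hd hz)
      have := (hTN x hx).1; have := hKN x hx
      exact ih _ (by simp only [Set.mem_Iio] at *; omega) _ rfl
    · refine mem_subring_of_mem_span_homogeneous (fun x hx => (hTP x hx).2)
        (fun x hx => Subring.subset_closure (Or.inr (by simp [Finset.mem_coe.mp hx])))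
        (fun x hx => ?_) hz (hspanP d hd hz)
      have := (hTP x hx).1; have := hKP x hx
      exact ih _ (by simp only [Set.mem_Ioi] at *; omega) _ rfl
  refine ⟨TP ∪ TN ∪ W, eq_top_iff.mpr fun z _ => ?_⟩
  rw [← DirectSum.sum_support_decompose 𝒜 z]
  exact Subring.sum_mem _ fun i _ => hB _ i rfl (SetLike.coe_mem _)

end GradedRing

/-- For a `ℤ`-graded commutative ring `A` the following are equivalent:
(1) `A₀` is noetherian and `A` is a finitely generated `A₀`-algebra; (2) `A` is noetherian;
(3) every homogeneous ideal of `A` is finitely generated.  Moreover, if these hold and `M`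
is a finitely generated graded `A`-module, each graded piece `M_d` is a finitely generated
`A₀`-module. -/
theorem stmt_12 {A M : Type*} [CommRing A] [AddCommGroup M] [Module A M]
    (𝒜 : ℤ → AddSubgroup A) [GradedRing 𝒜]
    (ℳ : ℤ → AddSubgroup M) [DirectSum.Decomposition ℳ] [SetLike.GradedSMul 𝒜 ℳ] :
    ((IsNoetherianRing (𝒜 0) ∧ ∃ s : Finset A, Subring.closure ((𝒜 0 : Set A) ∪ ↑s) = ⊤)
        ↔ IsNoetherianRing A) ∧
    (IsNoetherianRing A ↔ ∀ I : Ideal A, I.IsHomogeneous 𝒜 → I.FG) ∧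
    (IsNoetherianRing A → Module.Finite A M →
      ∀ d : ℤ, ∃ s : Finset M, ↑s ⊆ (ℳ d : Set M) ∧
        ∀ m ∈ ℳ d, m ∈ AddSubgroup.closure {y : M | ∃ a ∈ 𝒜 0, ∃ x ∈ s, y = a • x}) := by
  have hFG_iff : IsNoetherianRing A ↔ ∀ I : Ideal A, I.IsHomogeneous 𝒜 → I.FG :=
    ⟨fun hA I _ => (isNoetherianRing_iff_ideal_fg A).mp hA I, fun hFG =>
      isNoetherianRing_of_isNoetherianRing_gradeZero (isNoetherianRing_gradeZero hFG)
        (exists_finset_subring_closure_eq_top hFG)⟩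
  refine ⟨⟨fun ⟨h₀, hs⟩ => isNoetherianRing_of_isNoetherianRing_gradeZero h₀ hs, fun hA => ?_⟩,
    hFG_iff, fun hA hM d => ?_⟩
  · have hFG := hFG_iff.mp hA
    exact ⟨isNoetherianRing_gradeZero hFG, exists_finset_subring_closure_eq_top hFG⟩
  · have : IsNoetherian A M := isNoetherian_of_isNoetherianRing_of_finite A M
    exact exists_finset_gradeZero_generators 𝒜 ℳ (IsNoetherian.noetherian _)
end

section
/- Let A be a noetherian local graded ring (a Z-graded commutative ring with a unique maximal homogeneous ideal). If A is good (homogeneous primes are determined by their degree-0 parts), then A is either quasi-standard (contains a homogeneous unit of positive degree) or quasi-trivial (every homogeneous element of nonzero degree is nilpotent). -/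
/-!
Suppose some homogeneous element of nonzero degree is not nilpotent. By noetherianity there is a
homogeneous prime `q` maximal among those not containing all homogeneous elements of nonzero
degree. Goodness at `q` gives `a ∈ A_d ∖ q` and `b ∈ A_{-d} ∖ q` with `d > 0`, and maximality of
`q` puts every homogeneous element of nonzero degree into the radical of `q + (a)`.

If `a` is not a unit, `q + (a)` is proper, so some valuation `v` has support `q`, is `≤ 1` on `A`
and has `v a < 1`. Let `w` run over finitely many homogeneous generators `w ∈ A_{-e_w}` of the
ideal spanned by the elements of negative degree, and let `u = max v(w)^{1/e_w}`, attained at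
`w₀`. Induction on the degree gives `v x ≤ u^n` for `x ∈ A_{-n}`. Writing `w₀^k ≡ c a (mod q)`
with `c` of degree `-(k e₀ + d)`, `u^{k e₀} = v(w₀^k) ≤ u^{k e₀ + d} v(a) < u^{k e₀}` unless
`u = 0`. Hence `v` vanishes on all negative degrees, contradicting `v b ≠ 0`.
-/

universe u

open DirectSum

theorem Ideal.exists_valuation_supp_eq_of_sup_span_ne_top {R : Type u} [CommRing R]
    {q : Ideal R} [q.IsPrime] {a : R} (ha : q ⊔ Ideal.span {a} ≠ ⊤) :
    ∃ (Γ₀ : Type u) (_ : LinearOrderedCommGroupWithZero Γ₀) (v : Valuation R Γ₀),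
      v.supp = q ∧ (∀ x, v x ≤ 1) ∧ v a < 1 := by
  let f : R →+* FractionRing (R ⧸ q) := (algebraMap (R ⧸ q) _).comp (Ideal.Quotient.mk q)
  have hf : ∀ x, f x = 0 ↔ x ∈ q := by
    simp [f, Ideal.Quotient.eq_zero_iff_mem]
  have hI : Ideal.span {f.rangeRestrict a} ≠ ⊤ := by
    rw [Ne, Ideal.span_singleton_eq_top, isUnit_iff_exists]
    rintro ⟨⟨_, r, rfl⟩, har, -⟩
    apply ha
    rw [Ideal.eq_top_iff_one, ← sub_sub_cancel (a * r) 1]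
    refine sub_mem (Ideal.mem_sup_right (Ideal.mem_span_singleton.mpr (dvd_mul_right a r)))
      (Ideal.mem_sup_left ((hf _).mp ?_))
    simpa [sub_eq_zero] using congrArg Subtype.val har
  obtain ⟨V, hBV, hIV⟩ := Ideal.image_subset_nonunits_valuationSubring _ hI
  refine ⟨_, inferInstance, V.valuation.comap f, ?_, fun x => ?_, ?_⟩
  · ext x
    rw [Valuation.mem_supp_iff, Valuation.comap_apply, map_eq_zero, hf]
  · exact (V.valuation_le_one_iff _).mpr (hBV ⟨x, rfl⟩)
  · exact V.mem_nonunits_iff.mp (hIV ⟨_, Ideal.subset_span rfl, rfl⟩)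

theorem Ideal.IsHomogeneous.exists_homogeneous_coeffs {ι A : Type*} [AddCommGroup ι]
    [DecidableEq ι] [CommRing A] {𝒜 : ι → AddSubgroup A} [GradedRing 𝒜] {I : Ideal A}
    (hI : I.IsHomogeneous 𝒜) {s : Finset A} {deg : A → ι} (hs : ∀ w ∈ s, w ∈ 𝒜 (deg w))
    {i : ι} {x : A} (hx : x ∈ 𝒜 i) (hxs : x ∈ I ⊔ Ideal.span s) :
    ∃ c : A → A, (∀ w ∈ s, c w ∈ 𝒜 (i - deg w)) ∧ x - ∑ w ∈ s, c w * w ∈ I := by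
  obtain ⟨r, hr, t, ht, rfl⟩ := Submodule.mem_sup.mp hxs
  obtain ⟨f, -, rfl⟩ := Submodule.mem_span_finset.mp ht
  refine ⟨fun w => decompose 𝒜 (f w) (i - deg w), fun w _ => SetLike.coe_mem _, ?_⟩
  have hcomp (w) (hw : w ∈ s) :
      (decompose 𝒜 (f w * w) i : A) = decompose 𝒜 (f w) (i - deg w) * w := by
    rw [← coe_decompose_mul_add_of_right_mem 𝒜 (hs w hw), sub_add_cancel]
  convert hI i hr using 1
  rw [← decompose_of_mem_same 𝒜 hx, decompose_add, DirectSum.add_apply, AddSubgroup.coe_add,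
    decompose_sum, DFinsupp.finsetSum_apply, AddSubgroup.val_finsetSum,
    ← Finset.sum_congr rfl hcomp]
  simp [smul_eq_mul]

section IntGraded

variable {A : Type*} [CommRing A]

def nonzeroDegreeIdeal (𝒜 : ℤ → AddSubgroup A) : Ideal A := Ideal.span {y | ∃ i ≠ 0, y ∈ 𝒜 i}

variable {𝒜 : ℤ → AddSubgroup A}

theorem nonzeroDegreeIdeal_le_iff {I : Ideal A} :
    nonzeroDegreeIdeal 𝒜 ≤ I ↔ ∀ i ≠ 0, ∀ y ∈ 𝒜 i, y ∈ I := by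
  simp only [nonzeroDegreeIdeal, Ideal.span_le, Set.subset_def, Set.mem_ofPred_eq,
    SetLike.mem_coe]
  exact ⟨fun h i hi y hy => h y ⟨i, hi, hy⟩, fun h y ⟨i, hi, hy⟩ => h i hi y hy⟩

theorem mem_nonzeroDegreeIdeal {i : ℤ} (hi : i ≠ 0) {y : A} (hy : y ∈ 𝒜 i) :
    y ∈ nonzeroDegreeIdeal 𝒜 :=
  Ideal.subset_span ⟨i, hi, hy⟩

variable (𝒜) in
theorem exists_finset_negDegree_generators [IsNoetherianRing A] :
    ∃ (W : Finset A) (e : A → ℕ), (∀ w ∈ W, 0 < e w ∧ w ∈ 𝒜 (-e w)) ∧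
      ∀ n : ℕ, 0 < n → ∀ x ∈ 𝒜 (-n), x ∈ Ideal.span W := by
  let S := {x : A | ∃ n : ℕ, 0 < n ∧ x ∈ 𝒜 (-n)}
  obtain ⟨W, hWS, hspan⟩ :=
    (Submodule.fg_span_iff_fg_span_finset_subset S).mp (IsNoetherian.noetherian (Ideal.span S))
  have (w : A) : ∃ n : ℕ, w ∈ W → 0 < n ∧ w ∈ 𝒜 (-n) := by
    by_cases hw : w ∈ W
    · exact (hWS hw).imp fun _ h _ => h
    · exact ⟨0, fun h => absurd h hw⟩
  choose e he using this
  exact ⟨W, e, fun w hw => he w hw, fun n hn x hx => hspan.le (Submodule.subset_span ⟨n, hn, hx⟩)⟩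

theorem exists_pos_degree_pair_notMem {q : Ideal A}
    (hgood : ∀ d : ℤ, (∀ a ∈ 𝒜 d, a ∈ q) ↔ (∀ a ∈ 𝒜 (-d), a ∈ q))
    (hq : ¬nonzeroDegreeIdeal 𝒜 ≤ q) :
    ∃ d : ℕ, 0 < d ∧ (∃ a ∈ 𝒜 d, a ∉ q) ∧ ∃ b ∈ 𝒜 (-d), b ∉ q := by
  rw [nonzeroDegreeIdeal_le_iff] at hq
  push Not at hq
  obtain ⟨i, hi, y, hy, hyq⟩ := hq
  obtain ⟨z, hz, hzq⟩ : ∃ z ∈ 𝒜 (-i), z ∉ q := by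
    by_contra! h
    exact hyq ((hgood i).mpr h y hy)
  refine ⟨i.natAbs, Int.natAbs_pos.mpr hi, ?_⟩
  rcases Int.natAbs_eq i with h | h
  · rw [← h]
    exact ⟨⟨y, hy, hyq⟩, z, hz, hzq⟩
  · rw [h, neg_neg] at hz
    rw [h] at hy
    exact ⟨⟨z, hz, hzq⟩, y, hy, hyq⟩

variable [GradedRing 𝒜]

theorem exists_maximal_homogeneous_prime_not_le [IsNoetherianRing A]
    (h : ¬nonzeroDegreeIdeal 𝒜 ≤ nilradical A) :
    ∃ q, Maximal (fun p : Ideal A => p.IsPrime ∧ p.IsHomogeneous 𝒜 ∧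
      ¬nonzeroDegreeIdeal 𝒜 ≤ p) q := by
  refine exists_maximal_of_wellFoundedGT _ ?_
  rw [nilradical, Submodule.zero_eq_bot, (Ideal.IsHomogeneous.bot 𝒜).radical_eq,
    le_sInf_iff] at h
  push Not at h
  obtain ⟨p, ⟨hp, -, hpp⟩, hNp⟩ := h
  exact ⟨p, hpp, hp, hNp⟩

theorem nonzeroDegreeIdeal_le_radical_sup_span {q : Ideal A}
    (hq : Maximal (fun p : Ideal A => p.IsPrime ∧ p.IsHomogeneous 𝒜 ∧
      ¬nonzeroDegreeIdeal 𝒜 ≤ p) q) {i : ℤ} {s : A} (hs : s ∈ 𝒜 i) (hsq : s ∉ q) :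
    nonzeroDegreeIdeal 𝒜 ≤ (q ⊔ Ideal.span {s}).radical := by
  have hhom : (q ⊔ Ideal.span {s}).IsHomogeneous 𝒜 :=
    hq.prop.2.1.sup (Ideal.homogeneous_span 𝒜 _ (by rintro _ rfl; exact ⟨i, hs⟩))
  rw [hhom.radical_eq, le_sInf_iff]
  rintro P ⟨hPh, hqsP, hP⟩
  by_contra hNP
  refine hsq (hq.eq_of_le ⟨hP, hPh, hNP⟩ (le_sup_left.trans hqsP) ▸ ?_)
  exact hqsP (Ideal.mem_sup_right (Ideal.mem_span_singleton_self s))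

theorem Valuation.pow_le_of_negDegree {Γ₀ : Type*} [LinearOrderedCommMonoidWithZero Γ₀]
    (v : Valuation A Γ₀) (hv : ∀ x, v x ≤ 1) {W : Finset A} {e : A → ℕ}
    (he : ∀ w ∈ W, 0 < e w ∧ w ∈ 𝒜 (-e w))
    (hW : ∀ n : ℕ, 0 < n → ∀ x ∈ 𝒜 (-n), x ∈ Ideal.span W) {E : ℕ} (hE : E ≠ 0) {u : Γ₀}
    (hu : u ≤ 1) (hWu : ∀ w ∈ W, v w ^ E ≤ u ^ e w) (n : ℕ) {x : A} (hx : x ∈ 𝒜 (-n)) :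
    v x ^ E ≤ u ^ n := by
  induction n using Nat.strong_induction_on generalizing x with
  | _ n ih =>
  rcases n.eq_zero_or_pos with rfl | hn
  · simpa using pow_le_one' (hv x) E
  obtain ⟨c, hc, hxc⟩ := (Ideal.IsHomogeneous.bot 𝒜).exists_homogeneous_coeffs
    (deg := fun w => -(e w : ℤ)) (fun w hw => (he w hw).2) hx
    (by rw [bot_sup_eq]; exact hW n hn x hx)
  rw [Submodule.mem_bot, sub_eq_zero] at hxc
  have hterm (w) (hw : w ∈ W) : v (c w * w) ^ E ≤ u ^ n := by
    rw [map_mul, mul_pow]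
    rcases le_or_gt n (e w) with hnw | hwn
    · calc v (c w) ^ E * v w ^ E ≤ 1 * u ^ e w := mul_le_mul' (pow_le_one' (hv _) E) (hWu w hw)
        _ ≤ u ^ n := by rw [one_mul]; exact pow_le_pow_right_of_le_one' hu hnw
    · have hcw : c w ∈ 𝒜 (-(n - e w : ℕ)) := by
        convert hc w hw using 2; push_cast [hwn.le]; ring
      calc v (c w) ^ E * v w ^ E ≤ u ^ (n - e w) * u ^ e w :=
            mul_le_mul' (ih _ (by have := (he w hw).1; omega) hcw) (hWu w hw)
        _ = u ^ n := by rw [← pow_add, Nat.sub_add_cancel hwn.le]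
  by_contra! hlt
  have hx0 : v x ≠ 0 := fun h => by
    simp [h, zero_pow hE] at hlt
  refine (v.map_sum_lt hx0 fun w hw => ?_).ne (congrArg v hxc).symm
  by_contra! hle
  exact (hterm w hw).not_gt (hlt.trans_le (pow_le_pow_left' hle E))

theorem Valuation.eq_zero_of_pow_le_of_pow_eq {Γ₀ : Type*} [LinearOrderedCommGroupWithZero Γ₀]
    (v : Valuation A Γ₀) (hsupp : v.supp.IsHomogeneous 𝒜) {d : ℕ} {a : A}
    (ha : a ∈ 𝒜 d) (hva : v a < 1) {E : ℕ} (hE : E ≠ 0) {u : Γ₀} (hu : u ≤ 1)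
    (hbound : ∀ (n : ℕ) {x : A}, x ∈ 𝒜 (-n) → v x ^ E ≤ u ^ n) {e : ℕ} {w : A}
    (hw : w ∈ 𝒜 (-e)) (hwrad : w ∈ (v.supp ⊔ Ideal.span {a}).radical) (hwu : v w ^ E = u ^ e) :
    u = 0 := by
  by_contra hu0
  obtain ⟨k, hk⟩ := hwrad
  obtain ⟨c, hc, hwc⟩ := hsupp.exists_homogeneous_coeffs (s := {a}) (deg := fun _ => (d : ℤ))
    (by simpa using ha) (SetLike.pow_mem_graded k hw) (by rwa [Finset.coe_singleton])
  simp only [Finset.mem_singleton, forall_eq, Finset.sum_singleton] at hc hwc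
  have hvw : v (w ^ k) = v (c a * a) := by
    simpa using v.map_add_supp (c a * a) hwc
  have hc' : v (c a) ^ E ≤ u ^ (k * e + d) :=
    hbound _ (by convert hc using 2; push_cast; ring)
  have hlt : u ^ d * v a ^ E < 1 :=
    (mul_le_mul' (pow_le_one' hu d) le_rfl).trans_lt ((one_mul _).trans_lt (pow_lt_one' hva hE))
  have hupos : 0 < u ^ (k * e) := pow_pos (zero_lt_iff.mpr hu0) _
  refine (mul_lt_mul_iff_right₀ hupos).mpr hlt |>.not_ge ?_
  calc u ^ (k * e) * 1 = v (w ^ k) ^ E := by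
        rw [mul_one, pow_mul', ← hwu, map_pow, ← pow_mul, ← pow_mul, mul_comm]
    _ = v (c a) ^ E * v a ^ E := by rw [hvw, map_mul, mul_pow]
    _ ≤ u ^ (k * e + d) * v a ^ E := mul_le_mul' hc' le_rfl
    _ = u ^ (k * e) * (u ^ d * v a ^ E) := by rw [pow_add, mul_assoc]

theorem Valuation.map_eq_zero_of_negDegree [IsNoetherianRing A] {Γ₀ : Type*}
    [LinearOrderedCommGroupWithZero Γ₀] (v : Valuation A Γ₀) (hsupp : v.supp.IsHomogeneous 𝒜)
    (hv : ∀ x, v x ≤ 1) {d : ℕ} {a : A} (ha : a ∈ 𝒜 d) (hva : v a < 1)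
    (hrad : ∀ n : ℕ, 0 < n → ∀ y ∈ 𝒜 (-n), y ∈ (v.supp ⊔ Ideal.span {a}).radical)
    {n : ℕ} (hn : 0 < n) {y : A} (hy : y ∈ 𝒜 (-n)) : v y = 0 := by
  obtain ⟨W, e, he, hW⟩ := exists_finset_negDegree_generators 𝒜
  -- `u` is `max_w v(w)^{1/e_w}` raised to the power `E`, which avoids roots in `Γ₀`.
  set E := ∏ w ∈ W, e w
  have hE : E ≠ 0 := (Finset.prod_pos fun w hw => (he w hw).1).ne'
  set u := W.sup fun w => v w ^ (E / e w)
  have hu : u ≤ 1 := Finset.sup_le fun w _ => pow_le_one' (hv w) _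
  have hpow (w) (hw : w ∈ W) : v w ^ E = (v w ^ (E / e w)) ^ e w := by
    rw [← pow_mul, Nat.div_mul_cancel (Finset.dvd_prod_of_mem e hw)]
  have hbound := v.pow_le_of_negDegree hv he hW hE hu fun w hw =>
    hpow w hw ▸ pow_le_pow_left' (Finset.le_sup (f := fun w => v w ^ (E / e w)) hw) _
  suffices hu0 : u = 0 by
    simpa [hu0, hn.ne', hE] using hbound n hy
  obtain rfl | hWne := W.eq_empty_or_nonempty
  · exact (bot_unique zero_le).symm
  obtain ⟨w, hw, huw⟩ := Finset.exists_mem_eq_sup W hWne fun w => v w ^ (E / e w)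
  exact v.eq_zero_of_pow_le_of_pow_eq hsupp ha hva hE hu hbound (he w hw).2
    (hrad _ (he w hw).1 w (he w hw).2) (by rw [hpow w hw, ← huw])

end IntGraded

/-- A good noetherian local graded ring (a `ℤ`-graded commutative
noetherian ring with a unique maximal homogeneous ideal) is either quasi-standard or
quasi-trivial. -/
theorem stmt_13 {A : Type*} [CommRing A] [IsNoetherianRing A]
    (𝒜 : ℤ → AddSubgroup A) [GradedRing 𝒜]
    (hlocal : ∃ m : Ideal A, m ≠ ⊤ ∧ m.IsHomogeneous 𝒜 ∧
      ∀ I : Ideal A, I.IsHomogeneous 𝒜 → I ≠ ⊤ → I ≤ m)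
    (hgood : ∀ p : Ideal A, p.IsPrime → p.IsHomogeneous 𝒜 →
      ∀ d : ℤ, ((∀ a ∈ 𝒜 d, a ∈ p) ↔ (∀ a ∈ 𝒜 (-d), a ∈ p))) :
    (∃ d : ℤ, 0 < d ∧ ∃ a ∈ 𝒜 d, IsUnit a) ∨
    (∀ d : ℤ, d ≠ 0 → ∀ a ∈ 𝒜 d, IsNilpotent a) := by
  refine or_iff_not_imp_right.mpr fun hnil => ?_
  obtain ⟨q, hq⟩ := exists_maximal_homogeneous_prime_not_le (𝒜 := 𝒜) fun h =>
    hnil fun d hd a ha => mem_nilradical.mp (h (mem_nonzeroDegreeIdeal hd ha))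
  obtain ⟨hqp, hqh, hNq⟩ := hq.prop
  obtain ⟨d, hd, ⟨a, ha, haq⟩, b, hb, hbq⟩ := exists_pos_degree_pair_notMem (hgood q hqp hqh) hNq
  refine ⟨d, by exact_mod_cast hd, a, ha, ?_⟩
  by_contra hau
  obtain ⟨m, hm, -, hmax⟩ := hlocal
  have hqa : q ⊔ Ideal.span {a} ≠ ⊤ := ne_top_of_le_ne_top hm <| sup_le (hmax q hqh hqp.ne_top)
    (hmax _ (Ideal.homogeneous_span 𝒜 _ (by rintro _ rfl; exact ⟨d, ha⟩))
      (by rwa [Ne, Ideal.span_singleton_eq_top]))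
  have hrad := nonzeroDegreeIdeal_le_radical_sup_span hq ha haq
  obtain ⟨Γ₀, _, v, rfl, hv, hva⟩ := Ideal.exists_valuation_supp_eq_of_sup_span_ne_top hqa
  exact hbq (v.map_eq_zero_of_negDegree hqh hv ha hva
    (fun n hn y hy => hrad (mem_nonzeroDegreeIdeal (by omega) hy)) hd hb)
end

section
/- Let R be a positively graded commutative ring (R_d = 0 for d < 0) and r ∈ R_n a non-nilpotent element with n > 0. Then the graded localization R_r (at powers of r) is quasi-standard, and standard if n = 1. Moreover, R itself is never quasi-standard, and R is good if and only if R is quasi-trivial. -/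
section Aux

variable {R : Type*} [CommRing R] (𝒜 : ℤ → AddSubgroup R) [GradedRing 𝒜]
  (hpos : ∀ d : ℤ, d < 0 → ∀ a ∈ 𝒜 d, a = (0 : R))

open DirectSum
include hpos in

theorem stmt15_proj0_mul (x y : R) :
    (DirectSum.decompose 𝒜 (x * y) 0 : R) =
      (DirectSum.decompose 𝒜 x 0 : R) * (DirectSum.decompose 𝒜 y 0 : R) := by
  classical
  rw [DirectSum.decompose_mul]
  rw [DirectSum.coe_mul_apply]
  refine Finset.sum_eq_single (0, 0) ?_ ?_
  · rintro ⟨i, j⟩ hmem hne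
    simp only [Finset.mem_filter] at hmem
    rcases hmem with ⟨-, hij⟩
    have : i ≠ 0 ∨ j ≠ 0 := by
      by_contra h
      push_neg at h
      exact hne (by simp [h.1, h.2])
    rcases this with hi | hj
    · have hlt : i < 0 ∨ 0 < i := lt_or_gt_of_ne hi
      rcases hlt with hlt | hlt
      · have : ((DirectSum.decompose 𝒜 x) i : R) = 0 :=
          hpos i hlt _ (SetLike.coe_mem _)
        simp [this]
      · have hj' : j < 0 := by omega
        have : ((DirectSum.decompose 𝒜 y) j : R) = 0 :=
          hpos j hj' _ (SetLike.coe_mem _)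
        simp [this]
    · have hlt : j < 0 ∨ 0 < j := lt_or_gt_of_ne hj
      rcases hlt with hlt | hlt
      · have : ((DirectSum.decompose 𝒜 y) j : R) = 0 :=
          hpos j hlt _ (SetLike.coe_mem _)
        simp [this]
      · have hi' : i < 0 := by omega
        have : ((DirectSum.decompose 𝒜 x) i : R) = 0 :=
          hpos i hi' _ (SetLike.coe_mem _)
        simp [this]
  · intro hnot
    simp only [Finset.mem_filter, Finset.mem_product, DFinsupp.mem_support_toFun, ne_eq,
      add_zero, and_true, not_and, not_not] at hnot
    by_cases hx0 : (DirectSum.decompose 𝒜 x) 0 = 0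
    · simp [hx0]
    · simp [hnot hx0]

include hpos in
theorem stmt15_q_prime {P : Ideal R} (hP : P.IsPrime) :
    ∃ q : Ideal R, q.IsPrime ∧ q.IsHomogeneous 𝒜 ∧
      (∀ x : R, x ∈ q ↔ (DirectSum.decompose 𝒜 x 0 : R) ∈ P) := by
  classical
  refine ⟨{ carrier := {x | (DirectSum.decompose 𝒜 x 0 : R) ∈ P}
            add_mem' := ?_
            zero_mem' := by simp
            smul_mem' := ?_ }, ?_, ?_, fun x => Iff.rfl⟩
  · intro x y hx hy
    have : (DirectSum.decompose 𝒜 (x + y) 0 : R) =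
        (DirectSum.decompose 𝒜 x 0 : R) + (DirectSum.decompose 𝒜 y 0 : R) := by
      simp [DirectSum.decompose_add]
    simp only [Set.mem_setOf_eq] at hx hy ⊢
    rw [this]
    exact add_mem hx hy
  · intro c x hx
    simp only [Set.mem_setOf_eq, smul_eq_mul] at hx ⊢
    rw [stmt15_proj0_mul 𝒜 hpos]
    exact Ideal.mul_mem_left _ _ hx
  · constructor
    · intro h
      have h1 : (1 : R) ∈ ({x | (DirectSum.decompose 𝒜 x 0 : R) ∈ P} : Set R) := by
        have := h ▸ (Submodule.mem_top (R := R) (x := (1:R)))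
        exact this
      simp only [Set.mem_setOf_eq] at h1
      rw [DirectSum.decompose_of_mem_same 𝒜 (SetLike.one_mem_graded 𝒜)] at h1
      exact hP.ne_top (Ideal.eq_top_of_isUnit_mem _ h1 isUnit_one)
    · intro x y hxy
      simp only [Submodule.mem_mk, AddSubmonoid.mem_mk, AddSubsemigroup.mem_mk,
        Set.mem_setOf_eq] at hxy ⊢
      rw [stmt15_proj0_mul 𝒜 hpos] at hxy
      exact hP.mem_or_mem hxy
  · intro i x hx
    simp only [Submodule.mem_mk, AddSubmonoid.mem_mk, AddSubsemigroup.mem_mk,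
      Set.mem_setOf_eq] at hx ⊢
    by_cases hi : i = 0
    · subst hi
      rwa [DirectSum.decompose_of_mem_same 𝒜 (SetLike.coe_mem _)]
    · rw [DirectSum.decompose_of_mem_ne 𝒜 (SetLike.coe_mem ((DirectSum.decompose 𝒜 x) i)) hi]
      simp

end Aux

/-- Let `R` be a positively graded commutative ring and `r ∈ R_n`
(`n > 0`) non-nilpotent.  Then the graded localization `R_r` is quasi-standard, and
standard if `n = 1`.  Moreover `R` itself is not quasi-standard, and `R` is good iff `R`
is quasi-trivial. -/

theorem stmt_15 {R : Type*} [CommRing R] (𝒜 : ℤ → AddSubgroup R) [GradedRing 𝒜]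
    (hpos : ∀ d : ℤ, d < 0 → ∀ a ∈ 𝒜 d, a = (0 : R))
    (n : ℤ) (hn : 0 < n) (r : R) (hr : r ∈ 𝒜 n) (hnil : ¬ IsNilpotent r) :
    LocQuasiStandard 𝒜 (Submonoid.powers r) ∧
    (n = 1 → LocStandard 𝒜 (Submonoid.powers r)) ∧
    ¬ (∃ d : ℤ, 0 < d ∧ ∃ a ∈ 𝒜 d, IsUnit a) ∧
    ((∀ p q : Ideal R, p.IsPrime → q.IsPrime → p.IsHomogeneous 𝒜 → q.IsHomogeneous 𝒜 →
        (∀ a ∈ 𝒜 0, (a ∈ p ↔ a ∈ q)) → p = q)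
      ↔ (∀ d : ℤ, d ≠ 0 → ∀ a ∈ 𝒜 d, IsNilpotent a)) := by
  classical
  have hmk : ∀ d : ℤ, r ∈ 𝒜 d →
      Localization.mk r (1 : Submonoid.powers r) ∈ LocGrade 𝒜 (Submonoid.powers r) d := by
    intro d hd
    exact ⟨r, 1, 0, by simpa using hd, by simpa using SetLike.one_mem_graded 𝒜, rfl⟩
  have hunit : IsUnit (Localization.mk r (1 : Submonoid.powers r)) := by
    rw [Localization.mk_one_eq_algebraMap]
    exact IsLocalization.map_units (Localization (Submonoid.powers r))
      ⟨r, Submonoid.mem_powers r⟩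
  refine ⟨⟨n, hn, Localization.mk r 1, hmk n hr, hunit⟩,
    fun h1 => ⟨Localization.mk r 1, hmk 1 (h1 ▸ hr), hunit⟩, ?_, ?_, ?_⟩
  · rintro ⟨d, hd, a, ha, hu⟩
    obtain ⟨b, hb⟩ := hu.exists_right_inv
    have h0 : (DirectSum.decompose 𝒜 (a * b) 0 : R) =
        (DirectSum.decompose 𝒜 a 0 : R) * (DirectSum.decompose 𝒜 b 0 : R) :=
      stmt15_proj0_mul 𝒜 hpos a b
    rw [hb, DirectSum.decompose_of_mem_same 𝒜 (SetLike.one_mem_graded 𝒜),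
      DirectSum.decompose_of_mem_ne 𝒜 ha (by omega : d ≠ 0)] at h0
    simp only [zero_mul] at h0
    exact hnil ⟨1, by rw [pow_one]; calc r = r * 1 := (mul_one r).symm
      _ = r * 0 := by rw [h0]
      _ = 0 := mul_zero r⟩
  · -- good → quasi-trivial
    intro hgood d hd a ha
    rcases lt_trichotomy d 0 with hdlt | hdeq | hdgt
    · rw [hpos d hdlt a ha]; exact IsNilpotent.zero
    · exact absurd hdeq hd
    by_contra hna
    have hmem : a ∉ nilradical R := fun h => hna (mem_nilradical.mp h)
    rw [nilradical_eq_sInf] at hmem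
    have : ∃ J : Ideal R, J.IsPrime ∧ a ∉ J := by
      by_contra hcon
      push_neg at hcon
      exact hmem (Submodule.mem_sInf.mpr fun J hJ => hcon J hJ)
    obtain ⟨J, hJ, haJ⟩ := this
    set P := (J.homogeneousCore 𝒜).toIdeal with hPdef
    have hPprime : P.IsPrime := hJ.homogeneousCore
    have hPhom : P.IsHomogeneous 𝒜 := (J.homogeneousCore 𝒜).isHomogeneous
    have haP : a ∉ P := fun h => haJ (Ideal.toIdeal_homogeneousCore_le 𝒜 J h)
    obtain ⟨q, hqprime, hqhom, hqmem⟩ := stmt15_q_prime 𝒜 hpos hPprime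
    have hPq : P = q := by
      refine hgood P q hPprime hqprime hPhom hqhom ?_
      intro b hb
      rw [hqmem b, DirectSum.decompose_of_mem_same 𝒜 hb]
    have haq : a ∈ q := by
      rw [hqmem a, DirectSum.decompose_of_mem_ne 𝒜 ha hd]
      simp
    exact haP (hPq ▸ haq)
  · -- quasi-trivial → good
    intro htriv
    have key : ∀ p q : Ideal R, q.IsPrime → p.IsHomogeneous 𝒜 →
        (∀ a ∈ 𝒜 0, (a ∈ p → a ∈ q)) → p ≤ q := by
      intro p q hq hph hagree x hx
      have hxsum := DirectSum.sum_support_decompose 𝒜 x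
      rw [← hxsum]
      refine Submodule.sum_mem _ fun i _ => ?_
      by_cases hi : i = 0
      · subst hi
        exact hagree _ (SetLike.coe_mem _) (hph 0 hx)
      · have hni : IsNilpotent ((DirectSum.decompose 𝒜 x i : R)) :=
          htriv i hi _ (SetLike.coe_mem _)
        obtain ⟨k, hk⟩ := hni
        exact hq.mem_of_pow_mem k (hk ▸ q.zero_mem)
    intro p q hp hq hph hqh hagree
    exact le_antisymm (key p q hq hph fun a ha => (hagree a ha).mp)
      (key q p hp hqh fun a ha => (hagree a ha).mpr)
end

section
/- Let w = (w_0, …, w_n) be a tuple of positive integers, P = k[x_0,…,x_n] the polynomial ring graded by deg(x_i) = w_i over a commutative ring k, and p a homogeneous prime ideal of P not containing the irrelevant ideal (x_0,…,x_n). Then the graded localization P_p is standard (contains a unit of degree 1) if and only if gcd{w_i : x_i ∉ p} = 1. Consequently, P_p is standard for all such p if and only if w_0 = ⋯ = w_n = 1. -/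
noncomputable instance stmt17_gradedInstance {k : Type*} [CommRing k] {n : ℕ}
    (w : Fin (n + 1) → ℤ) :
    GradedAlgebra (MvPolynomial.weightedHomogeneousSubmodule k w) :=
  MvPolynomial.weightedGradedAlgebra k w

/-! A homogeneous unit of degree `d` in `P_p` is a fraction `a / s` of homogeneous `a, s ∉ p`
with `deg a - deg s = d`, so `P_p` is standard iff `1` lies in the group `I(p)` of differences of
degrees of homogeneous elements outside `p`. A homogeneous polynomial outside `p` has a monomial
outside `p`, and all variables of that monomial lie outside `p`; hence `I(p)` is generated by the
weights `wᵢ` with `xᵢ ∉ p`. For the second claim, the homogeneous prime killing every variable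
but `xᵢ` (and a maximal ideal of `k`) has `I(p) = wᵢ ℤ`. -/

namespace Localization

variable {A : Type*} [CommRing A] {T : Submonoid A}

theorem isUnit_mk_of_mem_s17 {a : A} (ha : a ∈ T) (s : T) : IsUnit (mk a s) :=
  isUnit_iff_exists_inv.mpr ⟨mk s ⟨a, ha⟩, by
    simpa only [mk_eq_mk'] using IsLocalization.mk'_mul_mk'_eq_one' (M := T) a s ha⟩

theorem notMem_of_isUnit_mk_s17 {p : Ideal A} [p.IsPrime] (hT : Disjoint (T : Set A) p) {a : A}
    {s : T} (h : IsUnit (mk a s)) : a ∉ p := fun ha => by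
  have : (p.map (algebraMap A (Localization T))).IsPrime :=
    IsLocalization.isPrime_of_isPrime_disjoint T _ p ‹_› hT
  refine this.ne_top (Ideal.eq_top_of_isUnit_mem _ ?_ h)
  rw [mk_eq_mk', IsLocalization.mk'_mem_iff]
  exact Ideal.mem_map_of_mem _ ha

end Localization

section Graded

variable {A σ : Type*} [CommRing A] [SetLike σ A] (𝒜 : ℤ → σ) [SetLike.GradedMonoid 𝒜]
  (p : Ideal A) [p.IsPrime]

/-- The group `I(p)` generated by the degrees `i` with `p ∩ 𝒜 i ≠ 𝒜 i`; since `p` is prime,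
these degrees form a monoid, so `I(p)` consists of their differences. -/
def degreeGroup : AddSubgroup ℤ where
  carrier := {d | ∃ e, (∃ a ∈ 𝒜 (d + e), a ∉ p) ∧ ∃ s ∈ 𝒜 e, s ∉ p}
  zero_mem' := ⟨0, ⟨1, SetLike.one_mem_graded 𝒜, p.one_notMem⟩,
    1, SetLike.one_mem_graded 𝒜, p.one_notMem⟩
  add_mem' := by
    rintro d d' ⟨e, ⟨a, ha, hap⟩, s, hs, hsp⟩ ⟨e', ⟨a', ha', hap'⟩, s', hs', hsp'⟩
    refine ⟨e + e', ⟨a * a', ?_, ?_⟩, s * s', SetLike.mul_mem_graded hs hs', ?_⟩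
    · convert SetLike.mul_mem_graded ha ha' using 2; ring
    · exact fun h => (‹p.IsPrime›.mem_or_mem h).elim hap hap'
    · exact fun h => (‹p.IsPrime›.mem_or_mem h).elim hsp hsp'
  neg_mem' := by
    rintro d ⟨e, ⟨a, ha, hap⟩, s, hs, hsp⟩
    exact ⟨d + e, ⟨s, by rwa [neg_add_cancel_left], hsp⟩, a, ha, hap⟩

variable {𝒜 p}

theorem locStandard_iff_one_mem_degreeGroup (T : Submonoid A)
    (hT : (T : Set A) = {a | (∃ d, a ∈ 𝒜 d) ∧ a ∉ p}) :
    LocStandard 𝒜 T ↔ 1 ∈ degreeGroup 𝒜 p := by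
  have hmem : ∀ a, a ∈ T ↔ (∃ d, a ∈ 𝒜 d) ∧ a ∉ p := fun a => Set.ext_iff.mp hT a
  constructor
  · rintro ⟨_, ⟨a, s, e, ha, hs, rfl⟩, hunit⟩
    have hdisj : Disjoint (T : Set A) p :=
      Set.disjoint_left.mpr fun b hb => ((hmem b).mp hb).2
    exact ⟨e, ⟨a, ha, Localization.notMem_of_isUnit_mk_s17 hdisj hunit⟩, s, hs, ((hmem s).mp s.2).2⟩
  · rintro ⟨e, ⟨a, ha, hap⟩, s, hs, hsp⟩
    have hsT : s ∈ T := (hmem s).mpr ⟨⟨e, hs⟩, hsp⟩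
    exact ⟨_, ⟨a, ⟨s, hsT⟩, e, ha, hs, rfl⟩,
      Localization.isUnit_mk_of_mem_s17 ((hmem a).mpr ⟨⟨1 + e, ha⟩, hap⟩) _⟩

end Graded

namespace MvPolynomial

variable {σ M : Type*} [AddCommMonoid M]

section CommSemiring

variable {R : Type*} [CommSemiring R] {w : σ → M}

theorem IsWeightedHomogeneous.mem_closure_of_notMem {I : Ideal (MvPolynomial σ R)}
    {a : MvPolynomial σ R} {d : M} (had : a.IsWeightedHomogeneous w d) (haI : a ∉ I) :
    d ∈ AddSubmonoid.closure {m | ∃ i, X i ∉ I ∧ m = w i} := by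
  obtain ⟨m, hm, hmI⟩ : ∃ m ∈ a.support, monomial m (coeff m a) ∉ I := by
    by_contra! h
    exact haI (a.as_sum ▸ I.sum_mem h)
  rw [← had (mem_support_iff.mp hm), Finsupp.weight_apply, Finsupp.sum]
  refine sum_mem fun j hj => nsmul_mem (AddSubmonoid.subset_closure ?_) _
  refine ⟨j, fun hXj => hmI ?_, rfl⟩
  exact I.mem_of_dvd (X_dvd_monomial.mpr (Or.inr (Finsupp.mem_support_iff.mp hj))) hXj

theorem IsWeightedHomogeneous.eval₂ {τ S : Type*} [CommSemiring S] {w' : τ → M}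
    (f : R →+* MvPolynomial τ S) (hf : ∀ r, (f r).IsWeightedHomogeneous w' 0)
    (g : σ → MvPolynomial τ S) (hg : ∀ i, (g i).IsWeightedHomogeneous w' (w i))
    {φ : MvPolynomial σ R} {d : M} (hφ : φ.IsWeightedHomogeneous w d) :
    (eval₂ f g φ).IsWeightedHomogeneous w' d := by
  rw [eval₂_eq]
  refine IsWeightedHomogeneous.sum _ _ _ fun m hm => ?_
  rw [← hφ (mem_support_iff.mp hm), ← zero_add (Finsupp.weight w m), Finsupp.weight_apply,
    Finsupp.sum]
  exact (hf _).mul (IsWeightedHomogeneous.prod _ _ _ fun j _ => (hg j).pow _)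

end CommSemiring

attribute [local instance] weightedGradedAlgebra

variable {R : Type*} [CommRing R]

variable (R) in
/-- The witness is the kernel of `R[x] → (R/𝔪)[x]`, reducing coefficients modulo a maximal ideal
and killing every variable except `xᵢ`. -/
theorem exists_isPrime_isHomogeneous_X_notMem [Nontrivial R] [DecidableEq M] (w : σ → M)
    (i : σ) : ∃ p : Ideal (MvPolynomial σ R), p.IsPrime ∧
      p.IsHomogeneous (weightedHomogeneousSubmodule R w) ∧ X i ∉ p ∧ ∀ j ≠ i, X j ∈ p := by
  classical
  obtain ⟨q, hq⟩ := Ideal.exists_maximal R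
  let g : σ → MvPolynomial σ (R ⧸ q) := fun j => if j = i then X i else 0
  have hg : ∀ j, (g j).IsWeightedHomogeneous w (w j) := fun j => by
    by_cases hj : j = i
    · subst hj; simpa [g] using isWeightedHomogeneous_X (R ⧸ q) w j
    · simpa [g, hj] using isWeightedHomogeneous_zero (R ⧸ q) w (w j)
  let φ : MvPolynomial σ R →+* MvPolynomial σ (R ⧸ q) :=
    eval₂Hom (C.comp (Ideal.Quotient.mk q)) g
  let χ : weightedHomogeneousSubmodule R w →+*ᵍ weightedHomogeneousSubmodule (R ⧸ q) w :=
    ⟨φ, fun hx => IsWeightedHomogeneous.eval₂ _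
      (fun r => isWeightedHomogeneous_C w (Ideal.Quotient.mk q r)) g hg hx⟩
  refine ⟨(HomogeneousIdeal.comap χ ⊥).toIdeal, Ideal.comap_isPrime φ ⊥,
    HomogeneousIdeal.isHomogeneous _, ?_, fun j hj => ?_⟩
  · change φ (X i) ≠ 0
    simp [φ, g]
  · change φ (X j) = 0
    simp [φ, g, hj]

theorem degreeGroup_weightedHomogeneousSubmodule (w : σ → ℤ) (p : Ideal (MvPolynomial σ R))
    [p.IsPrime] : (degreeGroup (weightedHomogeneousSubmodule R w) p).toIntSubmodule =
      Ideal.span {m | ∃ i, X i ∉ p ∧ m = w i} := by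
  have hclosure : AddSubmonoid.closure {m | ∃ i, X i ∉ p ∧ m = w i} ≤
      (Ideal.span {m | ∃ i, X i ∉ p ∧ m = w i}).toAddSubmonoid :=
    AddSubmonoid.closure_le.mpr Ideal.subset_span
  refine le_antisymm ?_ (Ideal.span_le.mpr ?_)
  · rintro d ⟨e, ⟨a, ha, hap⟩, s, hs, hsp⟩
    simpa using Ideal.sub_mem _ (hclosure (IsWeightedHomogeneous.mem_closure_of_notMem ha hap))
      (hclosure (IsWeightedHomogeneous.mem_closure_of_notMem hs hsp))
  · rintro _ ⟨i, hXi, rfl⟩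
    exact ⟨0, ⟨X i, by simpa using isWeightedHomogeneous_X R w i, hXi⟩,
      1, isWeightedHomogeneous_one R w, p.one_notMem⟩

theorem locStandard_iff_span_eq_top (w : σ → ℤ) (p : Ideal (MvPolynomial σ R)) [p.IsPrime]
    (T : Submonoid (MvPolynomial σ R))
    (hT : (T : Set (MvPolynomial σ R)) =
      {a | (∃ d, a ∈ weightedHomogeneousSubmodule R w d) ∧ a ∉ p}) :
    LocStandard (weightedHomogeneousSubmodule R w) T ↔
      Ideal.span {m | ∃ i, X i ∉ p ∧ m = w i} = ⊤ := by
  rw [locStandard_iff_one_mem_degreeGroup T hT, Ideal.eq_top_iff_one,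
    ← degreeGroup_weightedHomogeneousSubmodule]
  rfl

end MvPolynomial

/-- Let `P = k[x₀,…,xₙ]` be the weighted polynomial ring with
`deg xᵢ = wᵢ > 0` over a (nontrivial) commutative ring `k`, and `p` a homogeneous prime
not containing the irrelevant ideal.  Then the graded localization `P_p` is standard iff
`gcd{wᵢ : xᵢ ∉ p} = 1` (i.e. the ideal of `ℤ` generated by these weights is all of `ℤ`).
Consequently, `P_p` is standard for all such `p` iff `w₀ = ⋯ = wₙ = 1`. -/
theorem stmt_17 {k : Type*} [CommRing k] [Nontrivial k] {n : ℕ}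
    (w : Fin (n + 1) → ℤ) (hw : ∀ i, 0 < w i) :
    (∀ p : Ideal (MvPolynomial (Fin (n + 1)) k), p.IsPrime →
      p.IsHomogeneous (MvPolynomial.weightedHomogeneousSubmodule k w) →
      (∃ i, MvPolynomial.X i ∉ p) →
      ∀ T : Submonoid (MvPolynomial (Fin (n + 1)) k),
        (T : Set (MvPolynomial (Fin (n + 1)) k)) =
          {a | (∃ d : ℤ, a ∈ MvPolynomial.weightedHomogeneousSubmodule k w d) ∧ a ∉ p} →
        (LocStandard (MvPolynomial.weightedHomogeneousSubmodule k w) T ↔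
          Ideal.span {m : ℤ | ∃ i, MvPolynomial.X i ∉ p ∧ m = w i} = ⊤)) ∧
    ((∀ p : Ideal (MvPolynomial (Fin (n + 1)) k), p.IsPrime →
        p.IsHomogeneous (MvPolynomial.weightedHomogeneousSubmodule k w) →
        (∃ i, MvPolynomial.X i ∉ p) →
        ∀ T : Submonoid (MvPolynomial (Fin (n + 1)) k),
          (T : Set (MvPolynomial (Fin (n + 1)) k)) =
            {a | (∃ d : ℤ, a ∈ MvPolynomial.weightedHomogeneousSubmodule k w d) ∧ a ∉ p} →
          LocStandard (MvPolynomial.weightedHomogeneousSubmodule k w) T)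
      ↔ ∀ i, w i = 1) := by
  refine ⟨fun p hp _ _ T hT => have := hp; MvPolynomial.locStandard_iff_span_eq_top w p T hT, ?_⟩
  constructor
  · intro hstd i
    obtain ⟨p, hp, hhom, hXi, hXj⟩ := MvPolynomial.exists_isPrime_isHomogeneous_X_notMem k w i
    let T := SetLike.homogeneousSubmonoid (MvPolynomial.weightedHomogeneousSubmodule k w) ⊓
      p.primeCompl
    have hspan := (MvPolynomial.locStandard_iff_span_eq_top w p T rfl).mp
      (hstd p hp hhom ⟨i, hXi⟩ T rfl)
    have hsub : {m | ∃ j, MvPolynomial.X j ∉ p ∧ m = w j} ⊆ {w i} := by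
      rintro _ ⟨j, hj, rfl⟩
      obtain rfl : j = i := by_contra fun hji => hj (hXj j hji)
      rfl
    have hunit : IsUnit (w i) :=
      Ideal.span_singleton_eq_top.mp (top_le_iff.mp (hspan ▸ Ideal.span_mono hsub))
    have := hw i
    rcases Int.isUnit_iff.mp hunit with h | h <;> omega
  · rintro hone p hp - ⟨i, hXi⟩ T hT
    have := hp
    rw [MvPolynomial.locStandard_iff_span_eq_top w p T hT, Ideal.eq_top_iff_one]
    exact Ideal.subset_span ⟨i, hXi, (hone i).symm⟩
end

section
/- Let φ : R → S be a degree-preserving homomorphism of noetherian positively graded commutative rings. Then φ is a finite ring homomorphism (S is a finitely generated R-module) if and only if both: (a) the radical of the ideal generated by φ(R_+) contains S_+ (where R_+, S_+ are the ideals of positive-degree elements), and (b) the degree-0 map φ_0 : R_0 → S_0 is finite. -/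
/-!
If `S` is spanned over `R` by homogeneous elements of degree `≤ D`, then every homogeneous element
of degree `> D` lies in `φ(R₊)S`; this gives (a) after raising to a large power, and comparing
degree-`0` parts gives (b).

Conversely, let `S₊` be generated by finitely many homogeneous elements of degree `≤ D`. By (a)
and noetherianity, `S₊ᴺ ⊆ φ(R₊)S`, so a homogeneous element of degree `≥ ND` is a sum
`∑ bᵢ φ(rᵢ)` with `rᵢ` homogeneous of positive degree and `bᵢ` homogeneous of smaller degree.
By (b) and induction on the degree, the finitely many components of degree `≤ ND` lie in a
finitely generated `R`-module `M`, and the previous remark shows, again by induction on the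
degree, that `M = S`.
-/

open DirectSum

def homogeneousPos {A : Type*} [AddGroup A] (𝒜 : ℤ → AddSubgroup A) : Set A :=
  {a | ∃ d : ℤ, 0 < d ∧ a ∈ 𝒜 d}

theorem exists_finset_homogeneousPos_subset_span {S : Type*} [CommRing S] [IsNoetherianRing S]
    (𝒮 : ℤ → AddSubgroup S) :
    ∃ (t : Finset S) (e : S → ℤ), (∀ x ∈ t, 0 < e x ∧ x ∈ 𝒮 (e x)) ∧
      homogeneousPos 𝒮 ⊆ Ideal.span (t : Set S) := by
  obtain ⟨t, ht, hspan⟩ := (Submodule.fg_span_iff_fg_span_finset_subset _).mp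
    (IsNoetherian.noetherian (Ideal.span (homogeneousPos 𝒮)))
  choose! e he using ht
  exact ⟨t, e, he, fun s hs => hspan.le (Ideal.subset_span hs)⟩

section

variable {R S : Type*} [CommRing R] [CommRing S] [Algebra R S]
  (ℛ : ℤ → AddSubgroup R) (𝒮 : ℤ → AddSubgroup S) [GradedRing 𝒮]

theorem exists_homogeneous_coeffs_of_mem_span [GradedRing ℛ]
    (hφ : ∀ i, ∀ r ∈ ℛ i, algebraMap R S r ∈ 𝒮 i) {T : Finset S} {e : S → ℤ}
    (he : ∀ x ∈ T, x ∈ 𝒮 (e x)) {d : ℤ} {s : S} (hs : s ∈ 𝒮 d)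
    (hT : s ∈ Submodule.span R (T : Set S)) :
    ∃ r : S → R, (∀ x, r x ∈ ℛ (d - e x)) ∧ s = ∑ x ∈ T, r x • x := by
  classical
  let f : ℛ →+*ᵍ 𝒮 := ⟨algebraMap R S, hφ _ _⟩
  obtain ⟨c, -, rfl⟩ := Submodule.mem_span_finset.mp hT
  refine ⟨fun x => decompose ℛ (c x) (d - e x), fun x => SetLike.coe_mem _, ?_⟩
  conv_lhs => rw [← decompose_of_mem_same 𝒮 hs, decompose_sum, DFinsupp.finsetSum_apply,
    AddSubgroup.val_finsetSum]
  refine Finset.sum_congr rfl fun x hx => ?_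
  have key := coe_decompose_mul_add_of_right_mem 𝒮 (he x hx) (a := algebraMap R S (c x))
    (i := d - e x)
  rw [sub_add_cancel] at key
  rw [Algebra.smul_def, key, Algebra.smul_def]
  exact congrArg (· * x) (f.map_directSumDecompose (x := c x)).symm

theorem exists_finset_homogeneous_span_eq_top [Module.Finite R S] :
    ∃ (T : Finset S) (e : S → ℤ), (∀ x ∈ T, x ∈ 𝒮 (e x)) ∧
      Submodule.span R (T : Set S) = ⊤ := by
  classical
  obtain ⟨F, hF⟩ := Module.Finite.fg_top (R := R) (M := S)
  let T := F.biUnion fun y => (decompose 𝒮 y).support.image fun i => (decompose 𝒮 y i : S)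
  have hT : ∀ x ∈ T, ∃ i, x ∈ 𝒮 i := by
    simp only [T, Finset.mem_biUnion, Finset.mem_image]
    rintro _ ⟨y, -, i, -, rfl⟩
    exact ⟨i, SetLike.coe_mem _⟩
  choose! e he using hT
  refine ⟨T, e, he, eq_top_iff.mpr (hF ▸ Submodule.span_le.mpr fun y hy => ?_)⟩
  rw [← sum_support_decompose 𝒮 y]
  exact sum_mem fun i hi => Submodule.subset_span <|
    Finset.mem_biUnion.mpr ⟨y, hy, Finset.mem_image_of_mem _ hi⟩

theorem exists_forall_mem_span_of_lt_degree [GradedRing ℛ] [Module.Finite R S]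
    (hφ : ∀ i, ∀ r ∈ ℛ i, algebraMap R S r ∈ 𝒮 i) :
    ∃ D : ℤ, ∀ d, D < d → ∀ s ∈ 𝒮 d,
      s ∈ Ideal.span (algebraMap R S '' homogeneousPos ℛ) := by
  obtain ⟨T, e, he, hT⟩ := exists_finset_homogeneous_span_eq_top (R := R) 𝒮
  obtain ⟨D, hD⟩ := (T.image e).exists_le
  refine ⟨D, fun d hd s hs => ?_⟩
  obtain ⟨r, hr, rfl⟩ :=
    exists_homogeneous_coeffs_of_mem_span ℛ 𝒮 hφ he hs (hT ▸ Submodule.mem_top)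
  refine Ideal.sum_mem _ fun x hx => ?_
  rw [Algebra.smul_def]
  have hpos : 0 < d - e x := by linarith [hD _ (Finset.mem_image_of_mem e hx)]
  exact Ideal.mul_mem_right _ _ (Ideal.subset_span ⟨r x, ⟨_, hpos, hr x⟩, rfl⟩)

theorem mem_radical_span_of_finite [GradedRing ℛ] [Module.Finite R S]
    (hφ : ∀ i, ∀ r ∈ ℛ i, algebraMap R S r ∈ 𝒮 i) {s : S} (hs : s ∈ homogeneousPos 𝒮) :
    s ∈ (Ideal.span (algebraMap R S '' homogeneousPos ℛ)).radical := by
  obtain ⟨D, hD⟩ := exists_forall_mem_span_of_lt_degree ℛ 𝒮 hφ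
  obtain ⟨d, hd, hs⟩ := hs
  refine ⟨D.toNat + 1, hD _ ?_ _ (SetLike.pow_mem_graded _ hs)⟩
  rw [nsmul_eq_mul]
  push_cast
  nlinarith [Int.self_le_toNat D]

theorem exists_finset_closure_zero_of_finite [GradedRing ℛ] [Module.Finite R S]
    (hRpos : ∀ d : ℤ, d < 0 → ∀ r ∈ ℛ d, r = 0) (hSpos : ∀ d : ℤ, d < 0 → ∀ s ∈ 𝒮 d, s = 0)
    (hφ : ∀ i, ∀ r ∈ ℛ i, algebraMap R S r ∈ 𝒮 i) :
    ∃ t : Finset S, ↑t ⊆ (𝒮 0 : Set S) ∧ ∀ s ∈ 𝒮 0,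
      s ∈ AddSubgroup.closure {y | ∃ r ∈ ℛ 0, ∃ x ∈ t, y = algebraMap R S r * x} := by
  classical
  obtain ⟨T, e, he, hT⟩ := exists_finset_homogeneous_span_eq_top (R := R) 𝒮
  refine ⟨T.filter (e · = 0), fun x hx => ?_, fun s hs => ?_⟩
  · obtain ⟨hx, hx0⟩ := Finset.mem_filter.mp hx
    exact hx0 ▸ he x hx
  obtain ⟨r, hr, rfl⟩ :=
    exists_homogeneous_coeffs_of_mem_span ℛ 𝒮 hφ he hs (hT ▸ Submodule.mem_top)
  refine sum_mem fun x hx => ?_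
  rw [Algebra.smul_def]
  rcases lt_trichotomy (e x) 0 with hneg | hzero | hpos
  · rw [hSpos _ hneg x (he x hx), mul_zero]
    exact zero_mem _
  · refine AddSubgroup.subset_closure ⟨r x, ?_, x, Finset.mem_filter.mpr ⟨hx, hzero⟩, rfl⟩
    simpa [hzero] using hr x
  · rw [hRpos _ (by omega) _ (hr x), map_zero, zero_mul]
    exact zero_mem _

theorem mem_span_pow_of_mul_le_degree {t : Finset S} {e : S → ℤ}
    (he : ∀ x ∈ t, x ∈ 𝒮 (e x)) (ht : homogeneousPos 𝒮 ⊆ Ideal.span (t : Set S))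
    {D : ℤ} (hD : 0 < D) (heD : ∀ x ∈ t, e x ≤ D) (k : ℕ) :
    ∀ d, k * D ≤ d → ∀ s ∈ 𝒮 d, s ∈ Ideal.span (t : Set S) ^ k := by
  induction k with
  | zero => simp
  | succ k ih =>
    intro d hd s hs
    have hd0 : 0 < d := by push_cast at hd; nlinarith
    obtain ⟨b, hb, rfl⟩ :=
      exists_homogeneous_coeffs_of_mem_span 𝒮 𝒮 (fun _ _ h => h) he hs (ht ⟨d, hd0, hs⟩)
    refine Ideal.sum_mem _ fun x hx => ?_
    rw [pow_succ, smul_eq_mul]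
    refine Ideal.mul_mem_mul (ih _ ?_ _ (hb x)) (Ideal.subset_span hx)
    push_cast at hd
    linarith [heD x hx]

theorem exists_fg_forall_le_degree (hSpos : ∀ d : ℤ, d < 0 → ∀ s ∈ 𝒮 d, s = 0)
    {t : Finset S} {e : S → ℤ} (he : ∀ x ∈ t, 0 < e x ∧ x ∈ 𝒮 (e x))
    (ht : homogeneousPos 𝒮 ⊆ Ideal.span (t : Set S))
    {M₀ : Submodule R S} (hM₀ : M₀.FG) (h₀ : (𝒮 0 : Set S) ⊆ M₀) (n : ℕ) :
    ∃ M : Submodule R S, M.FG ∧ ∀ d : ℤ, d ≤ n → (𝒮 d : Set S) ⊆ M := by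
  induction n with
  | zero =>
    refine ⟨M₀, hM₀, fun d hd s hs => ?_⟩
    rcases (show d ≤ 0 by exact_mod_cast hd).lt_or_eq with hneg | rfl
    · rw [hSpos d hneg s hs]
      exact zero_mem _
    · exact h₀ hs
  | succ n ih =>
    obtain ⟨M, hM, hMle⟩ := ih
    refine ⟨M ⊔ t.sup fun x => M.map (LinearMap.mulRight R x),
      hM.sup (Submodule.fg_finset_sup _ _ fun x _ => hM.map _), fun d hd s hs => ?_⟩
    by_cases hdn : d ≤ n
    · exact Submodule.mem_sup_left (hMle d hdn hs)
    have hd0 : 0 < d := by omega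
    obtain ⟨b, hb, rfl⟩ := exists_homogeneous_coeffs_of_mem_span 𝒮 𝒮 (fun _ _ h => h)
      (fun x hx => (he x hx).2) hs (ht ⟨d, hd0, hs⟩)
    refine Submodule.sum_mem _ fun x hx => Submodule.mem_sup_right ?_
    refine Finset.le_sup (f := fun x => M.map (LinearMap.mulRight R x)) hx
      (Submodule.mem_map_of_mem (hMle _ ?_ (hb x)))
    push_cast at hd
    linarith [(he x hx).1]

theorem eq_top_of_forall_le_degree_subset (hφ : ∀ i, ∀ r ∈ ℛ i, algebraMap R S r ∈ 𝒮 i)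
    {M : Submodule R S} {B : ℤ} (hlow : ∀ d ≤ B, (𝒮 d : Set S) ⊆ M)
    (hhigh : ∀ d, B < d → ∀ s ∈ 𝒮 d, s ∈ Ideal.span (algebraMap R S '' homogeneousPos ℛ)) :
    M = ⊤ := by
  classical
  have key : ∀ n : ℕ, ∀ d ≤ B + n, (𝒮 d : Set S) ⊆ M := by
    intro n
    induction n with
    | zero => simpa using hlow
    | succ n ih =>
      intro d hd s hs
      by_cases hdn : d ≤ B + n
      · exact ih d hdn hs
      obtain ⟨T, hT, hsT⟩ := Submodule.mem_span_finite_of_mem_span (hhigh d (by omega) s hs)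
      have hThom : ∀ y ∈ T, ∃ r : R, ∃ i, (0 < i ∧ r ∈ ℛ i) ∧ algebraMap R S r = y := by
        intro y hy
        obtain ⟨r, ⟨i, hi, hr⟩, rfl⟩ := hT hy
        exact ⟨r, i, ⟨hi, hr⟩, rfl⟩
      choose! r e hre using hThom
      obtain ⟨b, hb, rfl⟩ := exists_homogeneous_coeffs_of_mem_span 𝒮 𝒮 (fun _ _ h => h)
        (e := e) (fun y hy => by simpa [(hre y hy).2] using hφ _ _ (hre y hy).1.2) hs hsT
      refine Submodule.sum_mem _ fun y hy => ?_
      have hby : b y • y = r y • b y := by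
        rw [smul_eq_mul, Algebra.smul_def, (hre y hy).2, mul_comm]
      rw [hby]
      refine M.smul_mem _ (ih _ ?_ (hb y))
      push_cast at hd
      linarith [(hre y hy).1.1]
  refine eq_top_iff.mpr fun s _ => ?_
  rw [← DirectSum.sum_support_decompose 𝒮 s]
  exact sum_mem fun d _ => key (d - B).toNat d (by omega) (SetLike.coe_mem _)

theorem module_finite_of_homogeneousPos_subset_radical [IsNoetherianRing S]
    (hSpos : ∀ d : ℤ, d < 0 → ∀ s ∈ 𝒮 d, s = 0) (hφ : ∀ i, ∀ r ∈ ℛ i, algebraMap R S r ∈ 𝒮 i)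
    (hrad : homogeneousPos 𝒮 ⊆ (Ideal.span (algebraMap R S '' homogeneousPos ℛ)).radical)
    {t₀ : Finset S} (h₀ : (𝒮 0 : Set S) ⊆ Submodule.span R (t₀ : Set S)) :
    Module.Finite R S := by
  obtain ⟨t, e, he, ht⟩ := exists_finset_homogeneousPos_subset_span 𝒮
  obtain ⟨D, hD⟩ := (insert 1 (t.image e)).exists_le
  have hD1 : 0 < D := hD 1 (Finset.mem_insert_self _ _)
  have heD : ∀ x ∈ t, e x ≤ D := fun x hx =>
    hD _ (Finset.mem_insert_of_mem (Finset.mem_image_of_mem e hx))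
  obtain ⟨N, hN⟩ := Ideal.exists_pow_le_of_le_radical_of_fg
    (Ideal.span_le.mpr fun x hx => hrad ⟨e x, he x hx⟩) ⟨t, rfl⟩
  obtain ⟨M, hM, hlow⟩ := exists_fg_forall_le_degree 𝒮 hSpos he ht ⟨t₀, rfl⟩ h₀ (N * D).toNat
  have hhigh : ∀ d, N * D < d → ∀ s ∈ 𝒮 d,
      s ∈ Ideal.span (algebraMap R S '' homogeneousPos ℛ) := fun d hd s hs =>
    hN (mem_span_pow_of_mul_le_degree 𝒮 (fun x hx => (he x hx).2) ht hD1 heD N d hd.le s hs)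
  have hMtop : M = ⊤ := eq_top_of_forall_le_degree_subset ℛ 𝒮 hφ
    (fun d hd => hlow d (hd.trans (Int.self_le_toNat _))) hhigh
  exact ⟨hMtop ▸ hM⟩

end

theorem stmt_18_general {R S : Type*} [CommRing R] [CommRing S]
    [IsNoetherianRing S]
    (ℛ : ℤ → AddSubgroup R) (𝒮 : ℤ → AddSubgroup S) [GradedRing ℛ] [GradedRing 𝒮]
    (hRpos : ∀ d : ℤ, d < 0 → ∀ r ∈ ℛ d, r = (0 : R))
    (hSpos : ∀ d : ℤ, d < 0 → ∀ s ∈ 𝒮 d, s = (0 : S))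
    (φ : R →+* S) (hφ : ∀ d : ℤ, ∀ r ∈ ℛ d, φ r ∈ 𝒮 d) :
    φ.Finite ↔
      ((∀ s : S, (∃ d : ℤ, 0 < d ∧ s ∈ 𝒮 d) →
          s ∈ (Ideal.span (⇑φ '' {r : R | ∃ d : ℤ, 0 < d ∧ r ∈ ℛ d})).radical) ∧
       (∃ t : Finset S, ↑t ⊆ (𝒮 0 : Set S) ∧ ∀ s ∈ 𝒮 0,
          s ∈ AddSubgroup.closure {y : S | ∃ r ∈ ℛ 0, ∃ x ∈ t, y = φ r * x})) := by
  let _ : Algebra R S := φ.toAlgebra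
  constructor
  · intro hfin
    have : Module.Finite R S := hfin
    exact ⟨fun s hs => mem_radical_span_of_finite ℛ 𝒮 hφ hs,
      exists_finset_closure_zero_of_finite ℛ 𝒮 hRpos hSpos hφ⟩
  · rintro ⟨hrad, t₀, -, ht₀⟩
    have hclosure : AddSubgroup.closure {y : S | ∃ r ∈ ℛ 0, ∃ x ∈ t₀, y = φ r * x} ≤
        (Submodule.span R (t₀ : Set S)).toAddSubgroup := by
      rw [AddSubgroup.closure_le]
      rintro _ ⟨r, -, x, hx, rfl⟩
      exact Submodule.smul_mem _ r (Submodule.subset_span hx)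
    exact module_finite_of_homogeneousPos_subset_radical ℛ 𝒮 hSpos hφ hrad
      fun s hs => hclosure (ht₀ s hs)

/-- Let `φ : R → S` be a degree-preserving homomorphism of noetherian
positively graded commutative rings.  Then `φ` is finite iff (a) `S₊` is contained in the
radical of the ideal generated by `φ(R₊)`, and (b) `φ₀ : R₀ → S₀` is finite (i.e. `S₀` is
a finitely generated `R₀`-module via `φ`). -/
theorem stmt_18 {R S : Type*} [CommRing R] [CommRing S]
    [IsNoetherianRing R] [IsNoetherianRing S]
    (ℛ : ℤ → AddSubgroup R) (𝒮 : ℤ → AddSubgroup S) [GradedRing ℛ] [GradedRing 𝒮]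
    (hRpos : ∀ d : ℤ, d < 0 → ∀ r ∈ ℛ d, r = (0 : R))
    (hSpos : ∀ d : ℤ, d < 0 → ∀ s ∈ 𝒮 d, s = (0 : S))
    (φ : R →+* S) (hφ : ∀ d : ℤ, ∀ r ∈ ℛ d, φ r ∈ 𝒮 d) :
    φ.Finite ↔
      ((∀ s : S, (∃ d : ℤ, 0 < d ∧ s ∈ 𝒮 d) →
          s ∈ (Ideal.span (⇑φ '' {r : R | ∃ d : ℤ, 0 < d ∧ r ∈ ℛ d})).radical) ∧
       (∃ t : Finset S, ↑t ⊆ (𝒮 0 : Set S) ∧ ∀ s ∈ 𝒮 0,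
          s ∈ AddSubgroup.closure {y : S | ∃ r ∈ ℛ 0, ∃ x ∈ t, y = φ r * x})) :=
  stmt_18_general ℛ 𝒮 hRpos hSpos φ hφ
end
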